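/- arXiv:2306.06175 — 10 statements merged into one kernel-verified Lean document; each statement's English description precedes it below -/
import Mathlib

section
/- (Numerical form of Proposition 4.1.) Let n ≥ 1 be an integer and D = (d; m_1, ..., m_n) ∈ ℤ^{1+n}. Suppose there exists a real number t with t² > n such that A_t · (2D − K) = 0. Then χ(D) < (n − 1)/8. -/
/-!
Divisor classes on the blowup of `P^2` at `n` very general points are modeled as
pairs `(d, m) : ℤ × (Fin n → ℤ)` representing `dH - ∑ mᵢ Eᵢ`.
-/

/-- The intersection pairing `D · D' = d d' - ∑ mᵢ mᵢ'`. -/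
def pairZ {n : ℕ} (D D' : ℤ × (Fin n → ℤ)) : ℤ :=
  D.1 * D'.1 - ∑ i, D.2 i * D'.2 i

/-- The canonical class `K = -3H + ∑ Eᵢ`, i.e. `(-3; -1, …, -1)`. -/
def KD (n : ℕ) : ℤ × (Fin n → ℤ) := (-3, fun _ => -1)

/-- The Riemann–Roch Euler characteristic `χ(D) = 1 + (1/2) D·(D - K)`. -/
def chi {n : ℕ} (D : ℤ × (Fin n → ℤ)) : ℚ :=
  1 + (pairZ D (D - KD n) : ℚ) / 2

/-- The real intersection pairing on `ℝ^{1+n}`. -/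
def pairR {n : ℕ} (x y : ℝ × (Fin n → ℝ)) : ℝ :=
  x.1 * y.1 - ∑ i, x.2 i * y.2 i

/-- The real vector associated to an integral divisor class. -/
def toR {n : ℕ} (D : ℤ × (Fin n → ℤ)) : ℝ × (Fin n → ℝ) :=
  ((D.1 : ℝ), fun i => (D.2 i : ℝ))

/-- The (real) class `A_t = tH - E = (t; 1, …, 1)`. -/
def At (n : ℕ) (t : ℝ) : ℝ × (Fin n → ℝ) := (t, fun _ => 1)

/-!
Write `F = 2D - K`. Since `K² = 9 - n`, Riemann–Roch reads `8 χ(D) = F² + n - 1`, so the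
claim is `F² < 0`. This is the light-cone inequality for the Lorentzian pairing:
`A_t² = t² - n > 0` and `A_t · F = 0`, while `F ≠ 0` because its first coordinate `2d + 3` is
odd. The inequality itself is Cauchy–Schwarz on the `n` exceptional coordinates.
-/

theorem pairR_self_neg_of_pairR_eq_zero {n : ℕ} {x y : ℝ × (Fin n → ℝ)}
    (hx : 0 < pairR x x) (hxy : pairR x y = 0) (hy : y ≠ 0) : pairR y y < 0 := by
  obtain ⟨a, u⟩ := x
  obtain ⟨b, v⟩ := y
  simp only [pairR, sub_pos, sub_eq_zero, sub_neg] at hx hxy ⊢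
  have hu : 0 ≤ ∑ i, u i * u i := Finset.sum_nonneg fun i _ => mul_self_nonneg (u i)
  have ha : 0 < a * a := hu.trans_lt hx
  by_cases hv : v = 0
  · subst hv
    simp only [Pi.zero_apply, mul_zero, Finset.sum_const_zero, mul_eq_zero] at hxy
    have hb : b = 0 := hxy.resolve_left (mul_self_pos.mp ha)
    exact (hy (by rw [hb]; rfl)).elim
  have hvpos : 0 < ∑ i, v i * v i := by
    obtain ⟨i, hi⟩ := Function.ne_iff.mp hv
    exact Finset.sum_pos' (fun j _ => mul_self_nonneg (v j))
      ⟨i, Finset.mem_univ i, mul_self_pos.mpr hi⟩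
  have cauchy_schwarz : (∑ i, u i * v i) ^ 2 ≤ (∑ i, u i ^ 2) * ∑ i, v i ^ 2 :=
    Finset.sum_mul_sq_le_sq_mul_sq _ _ _
  simp only [sq] at cauchy_schwarz
  refine lt_of_mul_lt_mul_left ?_ ha.le
  calc a * a * (b * b) = (a * b) * (a * b) := by ring
    _ ≤ (∑ i, u i * u i) * ∑ i, v i * v i := by rw [hxy]; exact cauchy_schwarz
    _ < a * a * ∑ i, v i * v i := mul_lt_mul_of_pos_right hx hvpos

theorem pairR_At_self (n : ℕ) (t : ℝ) : pairR (At n t) (At n t) = t ^ 2 - n := by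
  simp [pairR, At, sq]

theorem pairR_toR {n : ℕ} (D D' : ℤ × (Fin n → ℤ)) :
    pairR (toR D) (toR D') = pairZ D D' := by
  simp [pairR, toR, pairZ]

theorem toR_two_smul_sub_KD_ne_zero {n : ℕ} (D : ℤ × (Fin n → ℤ)) :
    toR ((2 : ℤ) • D - KD n) ≠ 0 := by
  intro h
  have h1 : (2 * D.1 + 3 : ℝ) = 0 := by simpa [toR, KD] using congrArg Prod.fst h
  have h2 : 2 * D.1 + 3 = 0 := by exact_mod_cast h1
  omega

theorem eight_mul_chi {n : ℕ} (D : ℤ × (Fin n → ℤ)) :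
    8 * chi D = pairZ ((2 : ℤ) • D - KD n) ((2 : ℤ) • D - KD n) + n - 1 := by
  have hsq (x : ℚ) : (2 * x + 1) * (2 * x + 1) = 4 * (x * (x + 1)) + 1 := by ring
  simp only [chi, pairZ, KD, Prod.fst_sub, Prod.snd_sub, Prod.smul_fst, Prod.smul_snd, smul_eq_mul,
    Pi.sub_apply, Pi.smul_apply, sub_neg_eq_add]
  push_cast
  simp only [hsq, Finset.sum_add_distrib, ← Finset.mul_sum, Finset.sum_const, Finset.card_univ,
    Fintype.card_fin, nsmul_eq_mul, mul_one]
  ring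

theorem chi_lt_of_orthogonal_general (n : ℕ) (D : ℤ × (Fin n → ℤ))
    (h : ∃ t : ℝ, (n : ℝ) < t ^ 2 ∧ pairR (At n t) (toR ((2 : ℤ) • D - KD n)) = 0) :
    chi D < ((n : ℚ) - 1) / 8 := by
  obtain ⟨t, ht, horth⟩ := h
  have hneg := pairR_self_neg_of_pairR_eq_zero (by rw [pairR_At_self]; linarith) horth
    (toR_two_smul_sub_KD_ne_zero D)
  rw [pairR_toR] at hneg
  have hnegQ : (pairZ ((2 : ℤ) • D - KD n) ((2 : ℤ) • D - KD n) : ℚ) < 0 := by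
    exact_mod_cast hneg
  linarith [eight_mul_chi D]

/-- Numerical form of Proposition 4.1: if there is `t` with `t² > n` and
`A_t · (2D - K) = 0`, then `χ(D) < (n-1)/8`. -/
theorem chi_lt_of_orthogonal (n : ℕ) (hn : 1 ≤ n) (D : ℤ × (Fin n → ℤ))
    (h : ∃ t : ℝ, (n : ℝ) < t ^ 2 ∧ pairR (At n t) (toR ((2 : ℤ) • D - KD n)) = 0) :
    chi D < ((n : ℚ) - 1) / 8 :=
  chi_lt_of_orthogonal_general n D h
end

section
/- (Numerical form of Proposition 4.6.) Let n ≥ 1 and 0 ≤ k ≤ n be integers, let d and m be integers, and let D = (d; m+1, ..., m+1, m, ..., m) ∈ ℤ^{1+n} be the balanced class whose first k multiplicities equal m+1 and whose remaining n−k multiplicities equal m. Suppose χ(D) ≥ 1 and that there exists a real number t with t² > n such that 2(A_t · D) = A_t · K. Then ℓ := min(k, n−k) satisfies ℓ < (1/2)(n − √((8χ(D)+1)n)). -/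
/-!
For `D = (d; m+1, …, m+1, m, …, m)` the condition `2 A_t · D = A_t · K` reads
`(2d + 3) t = n (2m + 1) + 2k`, so `t² > n` gives `(2d + 3)² n < (n (2m + 1) + 2k)²`.
Since `8 χ(D) + 1 = (2d + 3)² - 4 (m + 1) (n m + 2k)`, subtracting `4 n (m + 1) (n m + 2k)`
from both sides leaves `(8 χ(D) + 1) n < (n - 2k)²`, and `|n - 2k| = n - 2 min(k, n - k)`.
-/

lemma Fin.sum_ite_val_lt {M : Type*} [AddCommMonoid M] {n k : ℕ} (hk : k ≤ n) (a b : M) :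
    ∑ i : Fin n, (if (i : ℕ) < k then a else b) = k • a + (n - k) • b := by
  rw [Fin.sum_univ_eq_sum_range (fun i => if i < k then a else b) n, Finset.range_eq_Ico,
    ← Finset.sum_Ico_consecutive _ (Nat.zero_le k) hk,
    Finset.sum_congr rfl fun i hi => if_pos (Finset.mem_Ico.mp hi).2,
    Finset.sum_congr rfl fun i hi => if_neg (Nat.not_lt.mpr (Finset.mem_Ico.mp hi).1)]
  simp

lemma pairR_At_toR_KD (n : ℕ) (t : ℝ) : pairR (At n t) (toR (KD n)) = -3 * t + n := by
  simp [pairR, At, toR, KD]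
  ring

section OrderedRing

variable {α : Type*} [CommRing α] [LinearOrder α] [IsStrictOrderedRing α]

lemma sq_mul_lt_sq_of_mul_eq {a b t x : α} (ha : a ≠ 0) (hx : x < t ^ 2) (h : a * t = b) :
    a ^ 2 * x < b ^ 2 :=
  calc a ^ 2 * x < a ^ 2 * t ^ 2 := by gcongr
    _ = b ^ 2 := by rw [← h, mul_pow]

lemma abs_sub_two_mul_eq (a b : α) : |a - 2 * b| = a - 2 * min b (a - b) := by
  rcases le_total b (a - b) with h | h
  · rw [min_eq_left h, abs_of_nonneg (by linarith)]
  · rw [min_eq_right h, abs_of_nonpos (by linarith)]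
    ring

end OrderedRing

lemma min_lt_half_mul_sub_sqrt {a b x : ℝ} (hx : 0 ≤ x) (h : x < (a - 2 * b) ^ 2) :
    min b (a - b) < 1 / 2 * (a - √x) := by
  have := Real.sqrt_lt_sqrt hx h
  rw [Real.sqrt_sq_eq_abs, abs_sub_two_mul_eq] at this
  linarith

def balancedClass (n k : ℕ) (d m : ℤ) : ℤ × (Fin n → ℤ) :=
  (d, fun i => if (i : ℕ) < k then m + 1 else m)

section balancedClass

variable {n k : ℕ} (d m : ℤ)

lemma pairZ_balancedClass_sub_KD (hk : k ≤ n) :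
    pairZ (balancedClass n k d m) (balancedClass n k d m - KD n) =
      d * (d + 3) - (k * ((m + 1) * (m + 2)) + (n - k : ℕ) * (m * (m + 1))) := by
  simp only [pairZ, balancedClass, KD, Prod.fst_sub, Prod.snd_sub, Pi.sub_apply]
  simp_rw [apply_ite (fun x : ℤ => x * (x - -1)), Fin.sum_ite_val_lt hk, nsmul_eq_mul]
  ring

lemma eight_mul_chi_balancedClass_add_one (hk : k ≤ n) :
    8 * chi (balancedClass n k d m) + 1 = (2 * d + 3) ^ 2 - 4 * (m + 1) * (n * m + 2 * k) := by
  rw [chi, pairZ_balancedClass_sub_KD d m hk]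
  push_cast [Nat.cast_sub hk]
  ring

lemma pairR_At_toR_balancedClass (hk : k ≤ n) (t : ℝ) :
    pairR (At n t) (toR (balancedClass n k d m)) = t * d - (n * m + k) := by
  simp only [pairR, At, toR, balancedClass, one_mul]
  simp_rw [apply_ite (fun x : ℤ => (x : ℝ)), Fin.sum_ite_val_lt hk, nsmul_eq_mul]
  push_cast [Nat.cast_sub hk]
  ring

lemma eight_mul_chi_balancedClass_add_one_mul_lt_sq (hk : k ≤ n) {t : ℝ} (ht : (n : ℝ) < t ^ 2)
    (hAt : 2 * pairR (At n t) (toR (balancedClass n k d m)) = pairR (At n t) (toR (KD n))) :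
    (8 * (chi (balancedClass n k d m) : ℝ) + 1) * n < ((n : ℝ) - 2 * k) ^ 2 := by
  rw [pairR_At_toR_balancedClass d m hk, pairR_At_toR_KD] at hAt
  have hchi : 8 * (chi (balancedClass n k d m) : ℝ) + 1 =
      (2 * d + 3) ^ 2 - 4 * (m + 1) * (n * m + 2 * k) := by
    exact_mod_cast eight_mul_chi_balancedClass_add_one d m hk
  have hodd : (2 * d + 3 : ℝ) ≠ 0 := by exact_mod_cast (by omega : 2 * d + 3 ≠ 0)
  have hsq := sq_mul_lt_sq_of_mul_eq hodd ht
    (by linear_combination hAt : (2 * d + 3 : ℝ) * t = n * (2 * m + 1) + 2 * k)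
  rw [hchi]
  linear_combination hsq

end balancedClass

theorem steps_from_equal_lt_general (n : ℕ) (k : ℕ) (hk : k ≤ n) (d m : ℤ)
    (D : ℤ × (Fin n → ℤ))
    (hD : D = (d, fun i : Fin n => if (i : ℕ) < k then m + 1 else m))
    (hchi : 1 ≤ chi D)
    (ht : ∃ t : ℝ, (n : ℝ) < t ^ 2 ∧
      2 * pairR (At n t) (toR D) = pairR (At n t) (toR (KD n))) :
    (min k (n - k) : ℝ) <
      (1 / 2) * ((n : ℝ) - Real.sqrt ((8 * (chi D : ℝ) + 1) * n)) := by
  obtain ⟨t, htn, hAt⟩ := ht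
  change D = balancedClass n k d m at hD
  subst hD
  have hchi : (1 : ℝ) ≤ chi (balancedClass n k d m) := by exact_mod_cast hchi
  apply min_lt_half_mul_sub_sqrt (by positivity)
  exact eight_mul_chi_balancedClass_add_one_mul_lt_sq d m hk htn hAt

/-- Numerical form of Proposition 4.6: for a balanced class
`D = dH - (m+1)E' - mE''` (with `k` multiplicities equal to `m+1`) with `χ(D) ≥ 1`
such that `2 A_t · D = A_t · K` for some `t` with `t² > n`, the number
`ℓ = min(k, n-k)` of steps away from equal multiplicities satisfies
`ℓ < (1/2)(n - √((8χ(D)+1)n))`. -/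
theorem steps_from_equal_lt (n : ℕ) (hn : 1 ≤ n) (k : ℕ) (hk : k ≤ n) (d m : ℤ)
    (D : ℤ × (Fin n → ℤ))
    (hD : D = (d, fun i : Fin n => if (i : ℕ) < k then m + 1 else m))
    (hchi : 1 ≤ chi D)
    (ht : ∃ t : ℝ, (n : ℝ) < t ^ 2 ∧
      2 * pairR (At n t) (toR D) = pairR (At n t) (toR (KD n))) :
    (min k (n - k) : ℝ) <
      (1 / 2) * ((n : ℝ) - Real.sqrt ((8 * (chi D : ℝ) + 1) * n)) :=
  steps_from_equal_lt_general n k hk d m D hD hchi ht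
end

section
/- (Theorem 4.8(1), arithmetic core.) Let n ∈ {10, 11, 12} and let p_k/q_k (k ≥ 1) be the convergents of the simple continued fraction expansion of √n, so p_1/q_1 = 3/1. For every odd positive integer k: p_k and q_k are both odd, p_k² − n q_k² = 9 − n, and p_k < √n · q_k. -/
/-!
If `n = a² + d` with `0 < d ≤ 2a` and `d ∣ 2a`, then `√n = [a; b, 2a, b, 2a, …]` with `b = 2a / d`,
because `(√n - a)⁻¹ = b + (√n + a)⁻¹` and `√n + a = 2a + (√n - a)`. Feeding this period into the
continuant recurrences, the relations `p² - n q² = a² - n`, `p'² - n q'² = 1` and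
`p p' - n q q' = -a` between the convergents `p/q`, `p'/q'` of Mathlib indices `2j`, `2j + 1`
propagate from `j` to `j + 1`, and so does the parity `q` odd, `p ≡ a (mod 2)`, since the step to
index `2j + 2` adds `2a` times the previous convergent. For `n ∈ {10, 11, 12}` take `a = 3`.
-/

open GenContFract

namespace GenContFract.IntFractPair

variable {K : Type*} [Field K] [LinearOrder K] [IsStrictOrderedRing K] [FloorRing K]

theorem of_intCast_add (z : ℤ) {r : K} (h₀ : 0 ≤ r) (h₁ : r < 1) :
    IntFractPair.of (z + r) = ⟨z, r⟩ := by
  simp [IntFractPair.of, Int.floor_eq_zero_iff.2 ⟨h₀, h₁⟩, Int.fract_eq_self.2 ⟨h₀, h₁⟩]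

theorem stream_succ_of_inv_eq_intCast_add {v r s : K} {n : ℕ} {c z : ℤ}
    (h : IntFractPair.stream v n = some ⟨c, r⟩) (hr : r ≠ 0) (hinv : r⁻¹ = z + s)
    (h₀ : 0 ≤ s) (h₁ : s < 1) :
    IntFractPair.stream v (n + 1) = some ⟨z, s⟩ := by
  rw [stream_succ_of_some h hr, ← of_intCast_add z h₀ h₁, ← hinv]

end GenContFract.IntFractPair

namespace GenContFract

variable {v : ℝ} {a b : ℤ}

theorem IntFractPair.stream_of_period_two (ha : 1 ≤ a) (hav : a < v) (hva : v < a + 1)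
    (hb : b * (v ^ 2 - a ^ 2) = 2 * a) (j : ℕ) :
    IntFractPair.stream v (2 * j + 1) = some ⟨b, (v + a)⁻¹⟩ ∧
      IntFractPair.stream v (2 * j + 2) = some ⟨2 * a, v - a⟩ := by
  have ha' : (1 : ℝ) ≤ a := by exact_mod_cast ha
  have hsub : v - a ≠ 0 := by linarith
  have hadd : v + a ≠ 0 := by linarith
  have hstep₁ : ∀ {m : ℕ} {c : ℤ}, IntFractPair.stream v m = some ⟨c, v - a⟩ →
      IntFractPair.stream v (m + 1) = some ⟨b, (v + a)⁻¹⟩ := fun h ↦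
    IntFractPair.stream_succ_of_inv_eq_intCast_add h hsub
      (by field_simp; linear_combination -hb) (inv_nonneg.2 (by linarith))
      (inv_lt_one_of_one_lt₀ (by linarith))
  have hstep₂ : ∀ {m : ℕ} {c : ℤ}, IntFractPair.stream v m = some ⟨c, (v + a)⁻¹⟩ →
      IntFractPair.stream v (m + 1) = some ⟨2 * a, v - a⟩ := fun h ↦
    IntFractPair.stream_succ_of_inv_eq_intCast_add h (inv_ne_zero hadd)
      (by rw [inv_inv]; push_cast; ring) (by linarith) (by linarith)
  induction j with
  | zero =>
    have h₀ : IntFractPair.stream v 0 = some ⟨a, v - a⟩ := by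
      rw [IntFractPair.stream_zero, ← IntFractPair.of_intCast_add a (by linarith) (by linarith),
        add_sub_cancel]
    exact ⟨hstep₁ h₀, hstep₂ (hstep₁ h₀)⟩
  | succ j ih => exact ⟨hstep₁ ih.2, hstep₂ (hstep₁ ih.2)⟩

theorem of_s_get?_of_period_two (ha : 1 ≤ a) (hav : a < v) (hva : v < a + 1)
    (hb : b * (v ^ 2 - a ^ 2) = 2 * a) (j : ℕ) :
    (GenContFract.of v).s.get? (2 * j) = some ⟨1, b⟩ ∧
      (GenContFract.of v).s.get? (2 * j + 1) = some ⟨1, 2 * a⟩ := by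
  obtain ⟨hodd, heven⟩ := IntFractPair.stream_of_period_two ha hav hva hb j
  exact ⟨get?_of_eq_some_of_succ_get?_intFractPair_stream hodd,
    by simpa using get?_of_eq_some_of_succ_get?_intFractPair_stream heven⟩

end GenContFract

def ConvergentPellRelations (n a p q p' q' : ℤ) : Prop :=
  p ^ 2 - n * q ^ 2 = a ^ 2 - n ∧ p' ^ 2 - n * q' ^ 2 = 1 ∧ p * p' - n * q * q' = -a

theorem convergentPellRelations_start {n a b : ℤ} (hb : b * (n - a ^ 2) = 2 * a) :
    ConvergentPellRelations n a a 1 (b * a + 1) b :=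
  ⟨by ring, by linear_combination -b * hb, by linear_combination -hb⟩

theorem ConvergentPellRelations.step {n a b p q p' q' : ℤ} (hb : b * (n - a ^ 2) = 2 * a)
    (h : ConvergentPellRelations n a p q p' q') :
    ConvergentPellRelations n a (2 * a * p' + p) (2 * a * q' + q)
      (b * (2 * a * p' + p) + p') (b * (2 * a * q' + q) + q') := by
  obtain ⟨h₁, h₂, h₃⟩ := h
  have h₁' : (2 * a * p' + p) ^ 2 - n * (2 * a * q' + q) ^ 2 = a ^ 2 - n := by
    linear_combination 4 * a ^ 2 * h₂ + 4 * a * h₃ + h₁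
  refine ⟨h₁', ?_, ?_⟩
  · linear_combination b ^ 2 * h₁' + 4 * a * b * h₂ + 2 * b * h₃ + h₂ - b * hb
  · linear_combination b * h₁' + 2 * a * h₂ + h₃ - hb

section Sqrt

variable {n : ℕ} {a b : ℤ}

theorem sqrt_convergent_pairs_pell (han : a ^ 2 < n) (hna : n < (a + 1) ^ 2)
    (hb : b * (n - a ^ 2) = 2 * a) (j : ℕ) :
    ∃ p q p' q' : ℤ,
      (GenContFract.of √(n : ℝ)).nums (2 * j) = p ∧ (GenContFract.of √(n : ℝ)).dens (2 * j) = q ∧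
      (GenContFract.of √(n : ℝ)).nums (2 * j + 1) = p' ∧
      (GenContFract.of √(n : ℝ)).dens (2 * j + 1) = q' ∧
      Even (p - a) ∧ Odd q ∧ ConvergentPellRelations n a p q p' q' := by
  have ha : 1 ≤ a := by
    have : 0 ≤ a := by nlinarith
    rcases this.eq_or_lt with rfl | h
    · norm_num at han hna; omega
    · exact h
  have hav : (a : ℝ) < √n := (Real.lt_sqrt (by positivity)).2 (by exact_mod_cast han)
  have hva : √n < a + 1 := (Real.sqrt_lt' (by positivity)).2 (by exact_mod_cast hna)
  have hs := of_s_get?_of_period_two ha hav hva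
    (by rw [Real.sq_sqrt (by positivity)]; exact_mod_cast hb)
  induction j with
  | zero =>
    have hh : (GenContFract.of √(n : ℝ)).h = a := by
      rw [of_h_eq_floor, Int.floor_eq_iff.2 ⟨hav.le, hva⟩]
    refine ⟨a, 1, b * a + 1, b, hh, by simp, ?_, ?_, by simp, odd_one,
      convergentPellRelations_start hb⟩
    · rw [first_num_eq (hs 0).1, hh]; push_cast; ring
    · rw [first_den_eq (hs 0).1]
  | succ j ih =>
    obtain ⟨p, q, p', q', hp, hq, hp', hq', hpa, hq_odd, hrel⟩ := ih
    rw [show 2 * (j + 1) = 2 * j + 2 by ring, show 2 * j + 2 + 1 = 2 * j + 1 + 2 by ring]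
    have hs' : (GenContFract.of √(n : ℝ)).s.get? (2 * j + 1 + 1) = some ⟨1, b⟩ := (hs (j + 1)).1
    have hP := nums_recurrence (hs j).2 hp hp'
    have hQ := dens_recurrence (hs j).2 hq hq'
    refine ⟨2 * a * p' + p, 2 * a * q' + q, b * (2 * a * p' + p) + p', b * (2 * a * q' + q) + q',
      ?_, ?_, ?_, ?_, ?_, ?_, hrel.step hb⟩
    · rw [hP]; push_cast; ring
    · rw [hQ]; push_cast; ring
    · rw [nums_recurrence hs' hp' hP]; push_cast; ring
    · rw [dens_recurrence hs' hq' hQ]; push_cast; ring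
    · rw [add_sub_assoc, mul_assoc]; exact (even_two_mul _).add hpa
    · rw [mul_assoc]; exact (even_two_mul _).add_odd hq_odd

theorem sqrt_even_convergents_pell (han : a ^ 2 < n) (hna : n < (a + 1) ^ 2)
    (hb : b * (n - a ^ 2) = 2 * a) (j : ℕ) :
    ∃ p q : ℤ, Even (p - a) ∧ Odd q ∧
      (GenContFract.of √(n : ℝ)).nums (2 * j) = p ∧ (GenContFract.of √(n : ℝ)).dens (2 * j) = q ∧
      p ^ 2 - n * q ^ 2 = a ^ 2 - n ∧ p < √(n : ℝ) * q := by
  obtain ⟨p, q, -, -, hp, hq, -, -, hpa, hq_odd, hpell, -, -⟩ :=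
    sqrt_convergent_pairs_pell han hna hb j
  refine ⟨p, q, hpa, hq_odd, hp, hq, hpell, ?_⟩
  have hq_pos : (0 : ℝ) < q := by
    have := monotone_nat_of_le_succ (f := (GenContFract.of √(n : ℝ)).dens)
      (fun _ ↦ of_den_mono) (Nat.zero_le (2 * j))
    rw [zeroth_den_eq_one, hq] at this
    linarith
  have hsq : (p : ℝ) ^ 2 < (√(n : ℝ) * q) ^ 2 := by
    rw [mul_pow, Real.sq_sqrt (by positivity)]
    exact_mod_cast (by linarith : p ^ 2 < n * q ^ 2)
  exact lt_of_pow_lt_pow_left₀ 2 (by positivity) hsq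

end Sqrt

theorem odd_convergents_pell_general (n : ℕ) (hn : n ∈ ({10, 11, 12} : Set ℕ))
    (k : ℕ) (hk : Odd k) :
    ∃ p q : ℤ, Odd p ∧ Odd q ∧
      (p : ℝ) = (GenContFract.of (Real.sqrt n)).nums (k - 1) ∧
      (q : ℝ) = (GenContFract.of (Real.sqrt n)).dens (k - 1) ∧
      p ^ 2 - (n : ℤ) * q ^ 2 = 9 - (n : ℤ) ∧
      (p : ℝ) < Real.sqrt n * (q : ℝ) := by
  obtain ⟨j, rfl⟩ := hk
  rw [Nat.add_sub_cancel]
  obtain ⟨b, hb, hlo, hhi⟩ :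
      ∃ b : ℤ, b * (n - 3 ^ 2) = 2 * 3 ∧ (3 : ℤ) ^ 2 < n ∧ (n : ℤ) < (3 + 1) ^ 2 := by
    rcases hn with rfl | rfl | rfl
    exacts [⟨6, by norm_num⟩, ⟨3, by norm_num⟩, ⟨2, by norm_num⟩]
  obtain ⟨p, q, hp3, hq, hp, hq', hpell, hlt⟩ := sqrt_even_convergents_pell hlo hhi hb j
  exact ⟨p, q, by simpa using hp3.add_odd (by decide : Odd (3 : ℤ)), hq, hp.symm, hq'.symm,
    by linear_combination hpell, hlt⟩

/-- Theorem 4.8(1), arithmetic core: for `n ∈ {10,11,12}` and odd `k ≥ 1`, the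
numerator `p_k` and the denominator `q_k` of the `k`-th convergent of the
continued fraction of `√n` are both odd, satisfy the Pell equation
`p_k² - n q_k² = 9 - n`, and `p_k < √n · q_k`. -/
theorem odd_convergents_pell (n : ℕ) (hn : n ∈ ({10, 11, 12} : Set ℕ))
    (k : ℕ) (hk : Odd k) (hk1 : 1 ≤ k) :
    ∃ p q : ℤ, Odd p ∧ Odd q ∧
      (p : ℝ) = (GenContFract.of (Real.sqrt n)).nums (k - 1) ∧
      (q : ℝ) = (GenContFract.of (Real.sqrt n)).dens (k - 1) ∧
      p ^ 2 - (n : ℤ) * q ^ 2 = 9 - (n : ℤ) ∧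
      (p : ℝ) < Real.sqrt n * (q : ℝ) :=
  odd_convergents_pell_general n hn k hk
end

section
/- Let n ∈ {10, 11, 12}, set a = 6/(n−9), and let p_k/q_k (k ≥ 1) be the convergents of the simple continued fraction expansion of √n. Then for every k ≥ 1, the numerators and denominators satisfy the two-step recurrence p_{k+2} = (3a+1) p_k + (9a+6) q_k and q_{k+2} = a p_k + (3a+1) q_k. -/
/-!
If `n = c² + d` with `a d = 2c`, then `√n = [c; a, 2c, a, 2c, …]`, because
`1/(√n - c) = (√n + c)/d = a + (√n - c)/d` and `d/(√n - c) = √n + c = 2c + (√n - c)`.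
Since the partial quotients repeat with period two, any linear relation expressing
`(p_{m+2}, q_{m+2})` through `(p_m, q_m)` is propagated by the three-term recurrence, so it
suffices to check it for `m = 0, 1`. The relation in question is multiplication of
`p_m + q_m √n` by the unit `p_1 + q_1 √n = (ca + 1) + a √n`; here `c = 3` and `d = n - 9`.
-/

section SqrtOfEqSqAdd

variable {n c a d : ℕ}

theorem sqrt_sub_mul_sqrt_add_of_eq_sq_add (hn : n = c ^ 2 + d) :
    (√(n : ℝ) - c) * (√(n : ℝ) + c) = d := by
  have hn' : (n : ℝ) = c ^ 2 + d := by exact_mod_cast hn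
  linear_combination Real.sq_sqrt n.cast_nonneg + hn'

theorem natCast_lt_sqrt_lt_add_one_of_eq_sq_add (hn : n = c ^ 2 + d) (hc : 0 < c)
    (had : a * d = 2 * c) : (c : ℝ) < √(n : ℝ) ∧ √(n : ℝ) < c + 1 := by
  have ha : 0 < a := Nat.pos_of_ne_zero (by rintro rfl; omega)
  have hd : 0 < d := Nat.pos_of_ne_zero (by rintro rfl; omega)
  have hd' : d ≤ 2 * c := had ▸ Nat.le_mul_of_pos_left d ha
  constructor
  · rw [Real.lt_sqrt c.cast_nonneg]
    exact_mod_cast (by omega : c ^ 2 < n)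
  · rw [Real.sqrt_lt' (by positivity)]
    exact_mod_cast (by nlinarith : n < (c + 1) ^ 2)

theorem floor_sqrt_of_eq_sq_add (hn : n = c ^ 2 + d) (hc : 0 < c) (had : a * d = 2 * c) :
    ⌊√(n : ℝ)⌋ = c := by
  obtain ⟨hcv, hvc⟩ := natCast_lt_sqrt_lt_add_one_of_eq_sq_add hn hc had
  exact Int.floor_eq_iff.2 ⟨by push_cast; linarith, by push_cast; linarith⟩

end SqrtOfEqSqAdd

namespace GenContFract

section Periodic

variable {K : Type*} [Field K] (g : GenContFract K)

theorem nums_dens_add_two_of_periodic {α β γ δ : K}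
    (hper : ∀ m, ∃ gp, g.s.get? m = some gp ∧ g.s.get? (m + 2) = some gp)
    (hbase : ∀ m < 2, g.nums (m + 2) = α * g.nums m + β * g.dens m ∧
      g.dens (m + 2) = γ * g.nums m + δ * g.dens m) (m : ℕ) :
    g.nums (m + 2) = α * g.nums m + β * g.dens m ∧
      g.dens (m + 2) = γ * g.nums m + δ * g.dens m := by
  induction m using Nat.twoStepInduction with
  | zero => exact hbase 0 (by norm_num)
  | one => exact hbase 1 (by norm_num)
  | more m ih ih' =>
    obtain ⟨gp, hs, hs'⟩ := hper (m + 1)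
    have hn : g.nums (m + 2) = gp.b * g.nums (m + 1) + gp.a * g.nums m :=
      g.nums_recurrence hs rfl rfl
    have hd : g.dens (m + 2) = gp.b * g.dens (m + 1) + gp.a * g.dens m :=
      g.dens_recurrence hs rfl rfl
    have hn' : g.nums (m + 4) = gp.b * g.nums (m + 3) + gp.a * g.nums (m + 2) :=
      g.nums_recurrence hs' rfl rfl
    have hd' : g.dens (m + 4) = gp.b * g.dens (m + 3) + gp.a * g.dens (m + 2) :=
      g.dens_recurrence hs' rfl rfl
    constructor
    · linear_combination hn' + gp.b * ih'.1 + gp.a * ih.1 - α * hn - β * hd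
    · linear_combination hd' + gp.b * ih'.2 + gp.a * ih.2 - γ * hn - δ * hd

theorem nums_dens_add_two_of_periodic_of_two_mul_h {c a : K} (hh : g.h = c)
    (hs₀ : g.s.get? 0 = some ⟨1, a⟩) (hs₁ : g.s.get? 1 = some ⟨1, 2 * c⟩)
    (hper : ∀ m, ∃ gp, g.s.get? m = some gp ∧ g.s.get? (m + 2) = some gp) (m : ℕ) :
    g.nums (m + 2) = (c * a + 1) * g.nums m + (a * c ^ 2 + 2 * c) * g.dens m ∧
      g.dens (m + 2) = a * g.nums m + (c * a + 1) * g.dens m := by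
  have hs₂ : g.s.get? 2 = some ⟨1, a⟩ := by
    obtain ⟨gp, h₀, h₂⟩ := hper 0
    rw [hs₀, Option.some_inj] at h₀
    rwa [h₀]
  have n₀ : g.nums 0 = c := hh
  have n₁ : g.nums 1 = a * c + 1 := by rw [g.first_num_eq hs₀, hh]
  have n₂ : g.nums 2 = 2 * c * g.nums 1 + 1 * g.nums 0 := g.nums_recurrence hs₁ rfl rfl
  have n₃ : g.nums 3 = a * g.nums 2 + 1 * g.nums 1 := g.nums_recurrence hs₂ rfl rfl
  have d₀ : g.dens 0 = 1 := g.zeroth_den_eq_one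
  have d₁ : g.dens 1 = a := g.first_den_eq hs₀
  have d₂ : g.dens 2 = 2 * c * g.dens 1 + 1 * g.dens 0 := g.dens_recurrence hs₁ rfl rfl
  have d₃ : g.dens 3 = a * g.dens 2 + 1 * g.dens 1 := g.dens_recurrence hs₂ rfl rfl
  refine g.nums_dens_add_two_of_periodic hper (fun m hm => ?_) m
  interval_cases m <;> constructor <;>
    simp only [n₀, n₁, n₂, n₃, d₀, d₁, d₂, d₃] <;> ring

end Periodic

namespace IntFractPair

variable {K : Type*} [DivisionRing K] [LinearOrder K] [FloorRing K]

theorem of_eq_of_floor_eq {x : K} {z : ℤ} (h : ⌊x⌋ = z) :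
    IntFractPair.of x = ⟨z, x - z⟩ := by
  simp [IntFractPair.of, Int.fract, h]

theorem stream_add_eq_of_eq {v : K} {i j : ℕ}
    (h : IntFractPair.stream v i = IntFractPair.stream v j) (k : ℕ) :
    IntFractPair.stream v (i + k) = IntFractPair.stream v (j + k) := by
  induction k with
  | zero => exact h
  | succ k ih => rw [← add_assoc, ← add_assoc, IntFractPair.stream, ih]; rfl

theorem stream_sqrt_of_eq_sq_add {n c a d : ℕ} (hn : n = c ^ 2 + d) (hc : 0 < c)
    (had : a * d = 2 * c) :
    IntFractPair.stream √(n : ℝ) 1 = some ⟨a, (√(n : ℝ) - c) / d⟩ ∧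
      IntFractPair.stream √(n : ℝ) 2 = some ⟨2 * c, √(n : ℝ) - c⟩ ∧
      IntFractPair.stream √(n : ℝ) 3 = IntFractPair.stream √(n : ℝ) 1 := by
  set v := √(n : ℝ)
  obtain ⟨hcv, hvc⟩ := natCast_lt_sqrt_lt_add_one_of_eq_sq_add hn hc had
  have hprod : (v - c) * (v + c) = d := sqrt_sub_mul_sqrt_add_of_eq_sq_add hn
  have hd : (1 : ℝ) ≤ d := by exact_mod_cast Nat.pos_of_ne_zero (by rintro rfl; omega)
  have had' : (a : ℝ) * d = 2 * c := by exact_mod_cast had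
  have hfr₀ : v - c ≠ 0 := sub_ne_zero.2 hcv.ne'
  have hfr₁ : (v - c) / d ≠ 0 := div_ne_zero hfr₀ (by positivity)
  have h₀ : IntFractPair.stream v 0 = some ⟨c, v - c⟩ := by
    rw [stream_zero, of_eq_of_floor_eq (floor_sqrt_of_eq_sq_add hn hc had), Int.cast_natCast]
  have h₁ : IntFractPair.stream v 1 = some ⟨a, (v - c) / d⟩ := by
    have hinv : (v - c)⁻¹ = (v + c) / d := by field_simp; linarith
    have hfloor : ⌊(v + c) / d⌋ = a := by
      rw [Int.floor_eq_iff, le_div_iff₀ (by positivity), div_lt_iff₀ (by positivity)]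
      push_cast
      constructor <;> nlinarith
    rw [stream_succ_of_some h₀ hfr₀, hinv, of_eq_of_floor_eq hfloor, Int.cast_natCast]
    congr 2
    field_simp
    linarith
  have h₂ : IntFractPair.stream v 2 = some ⟨2 * c, v - c⟩ := by
    have hinv : ((v - c) / d)⁻¹ = v + c := by field_simp; linarith
    have hfloor : ⌊v + c⌋ = 2 * c :=
      Int.floor_eq_iff.2 ⟨by push_cast; linarith, by push_cast; linarith⟩
    rw [stream_succ_of_some h₁ hfr₁, hinv, of_eq_of_floor_eq hfloor]
    congr 2
    push_cast
    ring
  refine ⟨h₁, h₂, ?_⟩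
  rw [stream_succ_of_some h₂ hfr₀, stream_succ_of_some h₀ hfr₀]

end IntFractPair

section SqrtOfEqSqAdd

variable {n c a d : ℕ}

theorem of_sqrt_s_get?_periodic_of_eq_sq_add (hn : n = c ^ 2 + d) (hc : 0 < c)
    (had : a * d = 2 * c) (m : ℕ) :
    ∃ gp, (GenContFract.of √(n : ℝ)).s.get? m = some gp ∧
      (GenContFract.of √(n : ℝ)).s.get? (m + 2) = some gp := by
  obtain ⟨h₁, h₂, h₃⟩ := IntFractPair.stream_sqrt_of_eq_sq_add hn hc had
  have hper (m : ℕ) :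
      IntFractPair.stream √(n : ℝ) (m + 3) = IntFractPair.stream √(n : ℝ) (m + 1) := by
    simpa only [add_comm] using IntFractPair.stream_add_eq_of_eq h₃ m
  have hsome (m : ℕ) : ∃ p, IntFractPair.stream √(n : ℝ) (m + 1) = some p := by
    induction m using Nat.twoStepInduction with
    | zero => exact ⟨_, h₁⟩
    | one => exact ⟨_, h₂⟩
    | more m ih _ => rw [hper]; exact ih
  obtain ⟨p, hp⟩ := hsome m
  exact ⟨⟨1, p.b⟩, get?_of_eq_some_of_succ_get?_intFractPair_stream hp,
    get?_of_eq_some_of_succ_get?_intFractPair_stream ((hper m).trans hp)⟩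

theorem of_sqrt_nums_dens_add_two_of_eq_sq_add (hn : n = c ^ 2 + d) (hc : 0 < c)
    (had : a * d = 2 * c) (m : ℕ) :
    (GenContFract.of √(n : ℝ)).nums (m + 2) =
        (c * a + 1) * (GenContFract.of √(n : ℝ)).nums m
          + (a * c ^ 2 + 2 * c) * (GenContFract.of √(n : ℝ)).dens m ∧
      (GenContFract.of √(n : ℝ)).dens (m + 2) =
        a * (GenContFract.of √(n : ℝ)).nums m
          + (c * a + 1) * (GenContFract.of √(n : ℝ)).dens m := by
  obtain ⟨h₁, h₂, -⟩ := IntFractPair.stream_sqrt_of_eq_sq_add hn hc had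
  have hh : (GenContFract.of √(n : ℝ)).h = c := by
    rw [of_h_eq_floor, floor_sqrt_of_eq_sq_add hn hc had, Int.cast_natCast]
  refine nums_dens_add_two_of_periodic_of_two_mul_h _ hh ?_ ?_
    (of_sqrt_s_get?_periodic_of_eq_sq_add hn hc had) m
  · simpa using get?_of_eq_some_of_succ_get?_intFractPair_stream h₁
  · simpa using get?_of_eq_some_of_succ_get?_intFractPair_stream h₂

end SqrtOfEqSqAdd

end GenContFract

/-- For `n ∈ {10,11,12}` and `a = 6/(n-9)`, the numerators and denominators of
the convergents of `√n` satisfy the two-step recurrences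
`p_{k+2} = (3a+1) p_k + (9a+6) q_k` and `q_{k+2} = a p_k + (3a+1) q_k`. -/
theorem convergents_two_step_recurrence (n : ℕ) (hn : n ∈ ({10, 11, 12} : Set ℕ))
    (k : ℕ) (hk : 1 ≤ k) :
    (GenContFract.of (Real.sqrt n)).nums (k + 1) =
        (3 * ((6 : ℝ) / ((n : ℝ) - 9)) + 1) * (GenContFract.of (Real.sqrt n)).nums (k - 1)
          + (9 * ((6 : ℝ) / ((n : ℝ) - 9)) + 6) * (GenContFract.of (Real.sqrt n)).dens (k - 1)
      ∧
    (GenContFract.of (Real.sqrt n)).dens (k + 1) =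
        ((6 : ℝ) / ((n : ℝ) - 9)) * (GenContFract.of (Real.sqrt n)).nums (k - 1)
          + (3 * ((6 : ℝ) / ((n : ℝ) - 9)) + 1) * (GenContFract.of (Real.sqrt n)).dens (k - 1) := by
  obtain ⟨a, d, hnd, had, ha⟩ : ∃ a d : ℕ,
      n = 3 ^ 2 + d ∧ a * d = 2 * 3 ∧ (6 : ℝ) / ((n : ℝ) - 9) = a := by
    rcases hn with rfl | rfl | rfl
    exacts [⟨6, 1, rfl, rfl, by norm_num⟩, ⟨3, 2, rfl, rfl, by norm_num⟩,
      ⟨2, 3, rfl, rfl, by norm_num⟩]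
  obtain ⟨m, rfl⟩ : ∃ m, k = m + 1 := ⟨k - 1, by omega⟩
  obtain ⟨hnum, hden⟩ :=
    GenContFract.of_sqrt_nums_dens_add_two_of_eq_sq_add hnd (by norm_num) had m
  rw [ha, Nat.add_sub_cancel]
  push_cast at hnum hden
  exact ⟨by linear_combination hnum, by linear_combination hden⟩
end

section
/- (Theorem 4.8(2), arithmetic core.) Let n ∈ {10, 11, 12} and let p_k/q_k (k ≥ 1) be the convergents of the simple continued fraction expansion of √n. If x and y are positive integers with x² − n y² = 9 − n, then there exists an odd positive integer k such that x = p_k and y = q_k. -/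
/-!
For `n ∈ {10, 11, 12}`, the convergents `p_k / q_k` (k ≥ 1) of the simple
continued fraction expansion of `√n` are given, in Mathlib's terms, by
`(GenContFract.of (√n)).nums (k-1) / (GenContFract.of (√n)).dens (k-1)`
(Mathlib's indexing starts at 0, so the paper's `k`-th convergent is the
`(k-1)`-st in Mathlib; these continuants are automatically in lowest terms).
-/



open GenContFract

private lemma intFractPair_of_eq {v : ℝ} {b : ℤ} (h1 : (b:ℝ) ≤ v) (h2 : v < b + 1) :
    IntFractPair.of v = ⟨b, v - b⟩ := by
  have hfl : ⌊v⌋ = b := Int.floor_eq_iff.mpr ⟨h1, h2⟩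
  simp [IntFractPair.of, Int.fract, hfl]

/-- (X, U, Y, V) = (nums 2m, nums (2m+1), dens 2m, dens (2m+1)) as integers. -/
private def pSeq (a0 b0 b1 : ℤ) : ℕ → ℤ × ℤ × ℤ × ℤ
  | 0 => (a0, b0 * a0 + 1, 1, b0)
  | m + 1 =>
    let p := pSeq a0 b0 b1 m
    let x := b1 * p.2.1 + p.1
    let y := b1 * p.2.2.2 + p.2.2.1
    (x, b0 * x + p.2.1, y, b0 * y + p.2.2.2)

private lemma cf_eval (v : ℝ) (a0 b0 b1 : ℤ) (hfl : ⌊v⌋ = a0)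
    (hget0 : ∀ m : ℕ, (GenContFract.of v).s.get? (2 * m) = some ⟨1, (b0 : ℝ)⟩)
    (hget1 : ∀ m : ℕ, (GenContFract.of v).s.get? (2 * m + 1) = some ⟨1, (b1 : ℝ)⟩) :
    ∀ m : ℕ, (GenContFract.of v).nums (2 * m) = ((pSeq a0 b0 b1 m).1 : ℝ) ∧
      (GenContFract.of v).nums (2 * m + 1) = ((pSeq a0 b0 b1 m).2.1 : ℝ) ∧
      (GenContFract.of v).dens (2 * m) = ((pSeq a0 b0 b1 m).2.2.1 : ℝ) ∧
      (GenContFract.of v).dens (2 * m + 1) = ((pSeq a0 b0 b1 m).2.2.2 : ℝ) := by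
  intro m
  induction m with
  | zero =>
    have h0 : (GenContFract.of v).s.get? 0 = some ⟨1, (b0 : ℝ)⟩ := hget0 0
    have hh : (GenContFract.of v).h = (a0 : ℝ) := by rw [of_h_eq_floor, hfl]
    refine ⟨?_, ?_, ?_, ?_⟩
    · simpa [pSeq] using (zeroth_num_eq_h (g := GenContFract.of v)).trans hh
    · have := first_num_eq h0
      simp only [hh] at this
      simpa [pSeq] using this.trans (by push_cast; ring)
    · simpa [pSeq] using zeroth_den_eq_one (g := GenContFract.of v)
    · simpa [pSeq] using first_den_eq h0
  | succ m ih =>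
    obtain ⟨hX, hU, hY, hV⟩ := ih
    have e1 : 2 * (m + 1) = 2 * m + 1 + 1 := by ring
    have e2 : 2 * (m + 1) + 1 = 2 * m + 1 + 1 + 1 := by ring
    have g1 : (GenContFract.of v).s.get? (2 * m + 1) = some ⟨1, (b1 : ℝ)⟩ := hget1 m
    have g2 : (GenContFract.of v).s.get? (2 * m + 1 + 1) = some ⟨1, (b0 : ℝ)⟩ := by
      have := hget0 (m + 1); rwa [e1] at this
    have r1 := nums_recurrence g1 hX hU
    have r2 := nums_recurrence g2 hU r1
    have s1 := dens_recurrence g1 hY hV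
    have s2 := dens_recurrence g2 hV s1
    refine ⟨?_, ?_, ?_, ?_⟩
    · rw [show 2*(m+1) = 2*m+2 from by ring, r1]; simp only [pSeq]; push_cast; ring
    · rw [show 2*(m+1)+1 = 2*m+1+2 from by ring, r2]; simp only [pSeq]; push_cast; ring
    · rw [show 2*(m+1) = 2*m+2 from by ring, s1]; simp only [pSeq]; push_cast; ring
    · rw [show 2*(m+1)+1 = 2*m+1+2 from by ring, s2]; simp only [pSeq]; push_cast; ring

private lemma stream_period2 (v : ℝ) (a0 b1 b2 : ℤ) (f1 f2 : ℝ)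
    (h0 : IntFractPair.of v = ⟨a0, f1⟩)
    (hf1 : f1 ≠ 0) (h1 : IntFractPair.of f1⁻¹ = ⟨b1, f2⟩)
    (hf2 : f2 ≠ 0) (h2 : IntFractPair.of f2⁻¹ = ⟨b2, f1⟩) :
    ∀ m : ℕ, IntFractPair.stream v (2 * m + 1) = some ⟨b1, f2⟩ ∧
      IntFractPair.stream v (2 * m + 2) = some ⟨b2, f1⟩ := by
  intro m
  induction m with
  | zero =>
    have hs0 : IntFractPair.stream v 0 = some ⟨a0, f1⟩ := by
      rw [IntFractPair.stream_zero, h0]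
    have hs1 : IntFractPair.stream v 1 = some ⟨b1, f2⟩ := by
      have := IntFractPair.stream_succ_of_some hs0 hf1
      simpa [h1] using this
    refine ⟨hs1, ?_⟩
    have := IntFractPair.stream_succ_of_some hs1 hf2
    simpa [h2] using this
  | succ m ih =>
    have hs1 : IntFractPair.stream v (2 * (m + 1) + 1) = some ⟨b1, f2⟩ := by
      have := IntFractPair.stream_succ_of_some ih.2 hf1
      rw [show 2 * (m + 1) + 1 = 2 * m + 2 + 1 from by ring]
      simpa [h1] using this
    refine ⟨hs1, ?_⟩
    have := IntFractPair.stream_succ_of_some hs1 hf2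
    simpa [h2] using this

private lemma get?_period2 (v : ℝ) (a0 b1 b2 : ℤ) (f1 f2 : ℝ)
    (h0 : IntFractPair.of v = ⟨a0, f1⟩)
    (hf1 : f1 ≠ 0) (h1 : IntFractPair.of f1⁻¹ = ⟨b1, f2⟩)
    (hf2 : f2 ≠ 0) (h2 : IntFractPair.of f2⁻¹ = ⟨b2, f1⟩) :
    (∀ m : ℕ, (GenContFract.of v).s.get? (2 * m) = some ⟨1, (b1 : ℝ)⟩) ∧
      (∀ m : ℕ, (GenContFract.of v).s.get? (2 * m + 1) = some ⟨1, (b2 : ℝ)⟩) := by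
  have key := stream_period2 v a0 b1 b2 f1 f2 h0 hf1 h1 hf2 h2
  constructor
  · intro m
    exact get?_of_eq_some_of_succ_get?_intFractPair_stream (key m).1
  · intro m
    exact get?_of_eq_some_of_succ_get?_intFractPair_stream (key m).2

private lemma sqrt_facts (n : ℕ) (hn : (9:ℝ) < n) (hn' : (n:ℝ) < 16) :
    (Real.sqrt n) ^ 2 = n ∧ 3 < Real.sqrt n ∧ Real.sqrt n < 4 := by
  have h0 : (0:ℝ) ≤ n := by positivity
  have hs : (Real.sqrt n) ^ 2 = n := Real.sq_sqrt h0
  have hnn := Real.sqrt_nonneg (n:ℝ)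
  exact ⟨hs, by nlinarith, by nlinarith⟩

private lemma cf10 :
    ⌊Real.sqrt 10⌋ = 3 ∧
    (∀ m : ℕ, (GenContFract.of (Real.sqrt 10)).s.get? (2 * m) = some ⟨1, ((6:ℤ) : ℝ)⟩) ∧
      (∀ m : ℕ, (GenContFract.of (Real.sqrt 10)).s.get? (2 * m + 1) = some ⟨1, ((6:ℤ) : ℝ)⟩) := by
  obtain ⟨hs, h3, h4⟩ := sqrt_facts 10 (by norm_num) (by norm_num)
  push_cast at hs h3 h4
  set s := Real.sqrt 10 with hsdef
  have h0 : IntFractPair.of s = ⟨3, s - 3⟩ := by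
    rw [intFractPair_of_eq (b := 3) (by push_cast; linarith) (by push_cast; linarith)]; norm_num
  have hinv : (s - 3)⁻¹ = s + 3 := by
    rw [inv_eq_iff_eq_inv, eq_comm, inv_eq_of_mul_eq_one_right]; nlinarith
  have h1 : IntFractPair.of (s - 3)⁻¹ = ⟨6, s - 3⟩ := by
    rw [hinv, intFractPair_of_eq (b := 6) (by push_cast; linarith) (by push_cast; linarith)]
    norm_num; ring
  have hf : s - 3 ≠ 0 := by intro hc; nlinarith [sub_eq_zero.mp hc]
  refine ⟨Int.floor_eq_iff.mpr ⟨by norm_num; linarith, by push_cast; linarith⟩, ?_⟩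
  exact get?_period2 s 3 6 6 (s-3) (s-3) h0 hf h1 hf h1

private lemma cf11 :
    ⌊Real.sqrt 11⌋ = 3 ∧
    (∀ m : ℕ, (GenContFract.of (Real.sqrt 11)).s.get? (2 * m) = some ⟨1, ((3:ℤ) : ℝ)⟩) ∧
      (∀ m : ℕ, (GenContFract.of (Real.sqrt 11)).s.get? (2 * m + 1) = some ⟨1, ((6:ℤ) : ℝ)⟩) := by
  obtain ⟨hs, h3, h4⟩ := sqrt_facts 11 (by norm_num) (by norm_num)
  push_cast at hs h3 h4
  set s := Real.sqrt 11 with hsdef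
  have hlt : s < 3.5 := by nlinarith
  have h0 : IntFractPair.of s = ⟨3, s - 3⟩ := by
    rw [intFractPair_of_eq (b := 3) (by push_cast; linarith) (by push_cast; linarith)]; norm_num
  have hinv1 : (s - 3)⁻¹ = (s + 3) / 2 := by
    rw [inv_eq_iff_eq_inv, eq_comm, inv_eq_of_mul_eq_one_right]; nlinarith
  have h1 : IntFractPair.of (s - 3)⁻¹ = ⟨3, (s - 3) / 2⟩ := by
    rw [hinv1, intFractPair_of_eq (b := 3) (by push_cast; linarith) (by push_cast; linarith)]
    norm_num; ring
  have hinv2 : ((s - 3) / 2)⁻¹ = s + 3 := by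
    rw [inv_eq_iff_eq_inv, eq_comm, inv_eq_of_mul_eq_one_right]; nlinarith
  have h2 : IntFractPair.of ((s - 3) / 2)⁻¹ = ⟨6, s - 3⟩ := by
    rw [hinv2, intFractPair_of_eq (b := 6) (by push_cast; linarith) (by push_cast; linarith)]
    norm_num; ring
  have hf1 : s - 3 ≠ 0 := by intro hc; nlinarith [sub_eq_zero.mp hc]
  have hf2 : (s - 3) / 2 ≠ 0 := by intro hc; exact hf1 (by linarith [div_eq_zero_iff.mp hc])
  refine ⟨Int.floor_eq_iff.mpr ⟨by norm_num; linarith, by push_cast; linarith⟩, ?_⟩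
  exact get?_period2 s 3 3 6 (s-3) ((s-3)/2) h0 hf1 h1 hf2 h2

private lemma cf12 :
    ⌊Real.sqrt 12⌋ = 3 ∧
    (∀ m : ℕ, (GenContFract.of (Real.sqrt 12)).s.get? (2 * m) = some ⟨1, ((2:ℤ) : ℝ)⟩) ∧
      (∀ m : ℕ, (GenContFract.of (Real.sqrt 12)).s.get? (2 * m + 1) = some ⟨1, ((6:ℤ) : ℝ)⟩) := by
  obtain ⟨hs, h3, h4⟩ := sqrt_facts 12 (by norm_num) (by norm_num)
  push_cast at hs h3 h4
  set s := Real.sqrt 12 with hsdef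
  have hlt : s < 3.5 := by nlinarith
  have h0 : IntFractPair.of s = ⟨3, s - 3⟩ := by
    rw [intFractPair_of_eq (b := 3) (by push_cast; linarith) (by push_cast; linarith)]; norm_num
  have hinv1 : (s - 3)⁻¹ = (s + 3) / 3 := by
    rw [inv_eq_iff_eq_inv, eq_comm, inv_eq_of_mul_eq_one_right]; nlinarith
  have h1 : IntFractPair.of (s - 3)⁻¹ = ⟨2, (s - 3) / 3⟩ := by
    rw [hinv1, intFractPair_of_eq (b := 2) (by push_cast; linarith) (by push_cast; linarith)]
    norm_num; ring
  have hinv2 : ((s - 3) / 3)⁻¹ = s + 3 := by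
    rw [inv_eq_iff_eq_inv, eq_comm, inv_eq_of_mul_eq_one_right]; nlinarith
  have h2 : IntFractPair.of ((s - 3) / 3)⁻¹ = ⟨6, s - 3⟩ := by
    rw [hinv2, intFractPair_of_eq (b := 6) (by push_cast; linarith) (by push_cast; linarith)]
    norm_num; ring
  have hf1 : s - 3 ≠ 0 := by intro hc; nlinarith [sub_eq_zero.mp hc]
  have hf2 : (s - 3) / 3 ≠ 0 := by intro hc; exact hf1 (by linarith [div_eq_zero_iff.mp hc])
  refine ⟨Int.floor_eq_iff.mpr ⟨by norm_num; linarith, by push_cast; linarith⟩, ?_⟩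
  exact get?_period2 s 3 2 6 (s-3) ((s-3)/3) h0 hf1 h1 hf2 h2

private lemma step10 (m : ℕ) :
    (pSeq 3 6 6 (m+1)).1 = 19 * (pSeq 3 6 6 m).1 + 60 * (pSeq 3 6 6 m).2.2.1 ∧
    (pSeq 3 6 6 (m+1)).2.2.1 = 6 * (pSeq 3 6 6 m).1 + 19 * (pSeq 3 6 6 m).2.2.1 := by
  have inv : ∀ k, (pSeq 3 6 6 k).2.1 = 3 * (pSeq 3 6 6 k).1 + 10 * (pSeq 3 6 6 k).2.2.1 ∧
      (pSeq 3 6 6 k).2.2.2 = (pSeq 3 6 6 k).1 + 3 * (pSeq 3 6 6 k).2.2.1 := by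
    intro k
    induction k with
    | zero => simp [pSeq]
    | succ k ih => simp only [pSeq]; omega
  have := inv m
  simp only [pSeq]; omega

private lemma descent10 : ∀ N : ℕ, ∀ x y : ℤ, 0 < x → 0 < y → y.toNat ≤ N →
    x ^ 2 - 10 * y ^ 2 = -1 →
    ∃ m, x = (pSeq 3 6 6 m).1 ∧ y = (pSeq 3 6 6 m).2.2.1 := by
  intro N
  induction N with
  | zero => intro x y hx hy hN h; omega
  | succ N ih =>
    intro x y hx hy hN h
    have h' : x * x = 10 * (y * y) - 1 := by linear_combination h
    rcases eq_or_lt_of_le (show (1:ℤ) ≤ y by omega) with h1 | h2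
    · -- y = 1
      have hy1 : y = 1 := h1.symm
      subst hy1
      have hx3 : x ≤ 3 := by nlinarith
      have hx3' : 3 ≤ x := by nlinarith
      exact ⟨0, by simp [pSeq]; omega, by simp [pSeq]⟩
    · -- y ≥ 2
      have hy2 : 2 ≤ y := h2
      set x1 := 19 * x - 60 * y with hx1d
      set y1 := 19 * y - 6 * x with hy1d
      have hy1pos : 0 < y1 := by nlinarith
      have hy1lt : y1 < y := by nlinarith
      have heq : x1 ^ 2 - 10 * y1 ^ 2 = -1 := by linear_combination h
      have hx1pos : 0 < x1 := by
        rcases le_or_gt 7 y with h7 | h7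
        · nlinarith
        · exfalso
          have hxub : x ≤ 18 := by nlinarith
          interval_cases x <;> interval_cases y <;> omega
      obtain ⟨m, hm1, hm2⟩ := ih x1 y1 hx1pos hy1pos (by omega) heq
      refine ⟨m + 1, ?_, ?_⟩
      · rw [(step10 m).1, ← hm1, ← hm2]; omega
      · rw [(step10 m).2, ← hm1, ← hm2]; omega

private lemma step11 (m : ℕ) :
    (pSeq 3 3 6 (m+1)).1 = 10 * (pSeq 3 3 6 m).1 + 33 * (pSeq 3 3 6 m).2.2.1 ∧
    (pSeq 3 3 6 (m+1)).2.2.1 = 3 * (pSeq 3 3 6 m).1 + 10 * (pSeq 3 3 6 m).2.2.1 := by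
  have inv : ∀ k, 2 * (pSeq 3 3 6 k).2.1 = 3 * (pSeq 3 3 6 k).1 + 11 * (pSeq 3 3 6 k).2.2.1 ∧
      2 * (pSeq 3 3 6 k).2.2.2 = (pSeq 3 3 6 k).1 + 3 * (pSeq 3 3 6 k).2.2.1 := by
    intro k
    induction k with
    | zero => simp [pSeq]
    | succ k ih => simp only [pSeq]; omega
  have := inv m
  simp only [pSeq]; omega

private lemma descent11 : ∀ N : ℕ, ∀ x y : ℤ, 0 < x → 0 < y → y.toNat ≤ N →
    x ^ 2 - 11 * y ^ 2 = -2 →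
    ∃ m, x = (pSeq 3 3 6 m).1 ∧ y = (pSeq 3 3 6 m).2.2.1 := by
  intro N
  induction N with
  | zero => intro x y hx hy hN h; omega
  | succ N ih =>
    intro x y hx hy hN h
    have h' : x * x = 11 * (y * y) - 2 := by linear_combination h
    rcases eq_or_lt_of_le (show (1:ℤ) ≤ y by omega) with h1 | h2
    · have hy1 : y = 1 := h1.symm
      subst hy1
      have hx3 : x ≤ 3 := by nlinarith
      have hx3' : 3 ≤ x := by nlinarith
      exact ⟨0, by simp [pSeq]; omega, by simp [pSeq]⟩
    · have hy2 : 2 ≤ y := h2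
      set x1 := 10 * x - 33 * y with hx1d
      set y1 := 10 * y - 3 * x with hy1d
      have hy1pos : 0 < y1 := by nlinarith
      have hy1lt : y1 < y := by nlinarith
      have heq : x1 ^ 2 - 11 * y1 ^ 2 = -2 := by linear_combination h
      have hx1pos : 0 < x1 := by
        rcases le_or_gt 5 y with h7 | h7
        · nlinarith
        · exfalso
          have hxub : x ≤ 13 := by nlinarith
          interval_cases x <;> interval_cases y <;> omega
      obtain ⟨m, hm1, hm2⟩ := ih x1 y1 hx1pos hy1pos (by omega) heq
      refine ⟨m + 1, ?_, ?_⟩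
      · rw [(step11 m).1, ← hm1, ← hm2]; omega
      · rw [(step11 m).2, ← hm1, ← hm2]; omega

private lemma step12 (m : ℕ) :
    (pSeq 3 2 6 (m+1)).1 = 7 * (pSeq 3 2 6 m).1 + 24 * (pSeq 3 2 6 m).2.2.1 ∧
    (pSeq 3 2 6 (m+1)).2.2.1 = 2 * (pSeq 3 2 6 m).1 + 7 * (pSeq 3 2 6 m).2.2.1 := by
  have inv : ∀ k, (pSeq 3 2 6 k).2.1 = (pSeq 3 2 6 k).1 + 4 * (pSeq 3 2 6 k).2.2.1 ∧
      3 * (pSeq 3 2 6 k).2.2.2 = (pSeq 3 2 6 k).1 + 3 * (pSeq 3 2 6 k).2.2.1 := by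
    intro k
    induction k with
    | zero => simp [pSeq]
    | succ k ih => simp only [pSeq]; omega
  have := inv m
  simp only [pSeq]; omega

private lemma descent12 : ∀ N : ℕ, ∀ x y : ℤ, 0 < x → 0 < y → y.toNat ≤ N →
    x ^ 2 - 12 * y ^ 2 = -3 →
    ∃ m, x = (pSeq 3 2 6 m).1 ∧ y = (pSeq 3 2 6 m).2.2.1 := by
  intro N
  induction N with
  | zero => intro x y hx hy hN h; omega
  | succ N ih =>
    intro x y hx hy hN h
    have h' : x * x = 12 * (y * y) - 3 := by linear_combination h
    rcases eq_or_lt_of_le (show (1:ℤ) ≤ y by omega) with h1 | h2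
    · have hy1 : y = 1 := h1.symm
      subst hy1
      have hx3 : x ≤ 3 := by nlinarith
      have hx3' : 3 ≤ x := by nlinarith
      exact ⟨0, by simp [pSeq]; omega, by simp [pSeq]⟩
    · have hy2 : 2 ≤ y := h2
      set x1 := 7 * x - 24 * y with hx1d
      set y1 := 7 * y - 2 * x with hy1d
      have hy1pos : 0 < y1 := by nlinarith
      have hy1lt : y1 < y := by nlinarith
      have heq : x1 ^ 2 - 12 * y1 ^ 2 = -3 := by linear_combination h
      have hx1pos : 0 < x1 := by
        rcases le_or_gt 4 y with h7 | h7
        · nlinarith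
        · exfalso
          have hxub : x ≤ 10 := by nlinarith
          interval_cases x <;> interval_cases y <;> omega
      obtain ⟨m, hm1, hm2⟩ := ih x1 y1 hx1pos hy1pos (by omega) heq
      refine ⟨m + 1, ?_, ?_⟩
      · rw [(step12 m).1, ← hm1, ← hm2]; omega
      · rw [(step12 m).2, ← hm1, ← hm2]; omega

/-- Theorem 4.8(2), arithmetic core: for `n ∈ {10,11,12}`, every positive
integer solution `(x, y)` of the Pell equation `x² - n y² = 9 - n` arises as
`(p_k, q_k)` for some odd positive integer `k`, where `p_k/q_k` is the `k`-th
convergent of the continued fraction of `√n`. -/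
theorem pell_solution_is_odd_convergent (n : ℕ) (hn : n ∈ ({10, 11, 12} : Set ℕ))
    (x y : ℤ) (hx : 0 < x) (hy : 0 < y)
    (h : x ^ 2 - (n : ℤ) * y ^ 2 = 9 - (n : ℤ)) :
    ∃ k : ℕ, Odd k ∧ 1 ≤ k ∧
      (x : ℝ) = (GenContFract.of (Real.sqrt n)).nums (k - 1) ∧
      (y : ℝ) = (GenContFract.of (Real.sqrt n)).dens (k - 1) := by
  simp only [Set.mem_insert_iff, Set.mem_singleton_iff] at hn
  rcases hn with rfl | rfl | rfl
  · norm_num at h ⊢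
    obtain ⟨m, hm1, hm2⟩ := descent10 y.toNat x y hx hy le_rfl (by linarith)
    have cf := cf_eval (Real.sqrt 10) 3 6 6 cf10.1 cf10.2.1 cf10.2.2 m
    refine ⟨2 * m + 1, ⟨m, by ring⟩, by omega, ?_, ?_⟩
    · rw [show 2 * m + 1 - 1 = 2 * m from by omega, cf.1, hm1]
    · rw [show 2 * m + 1 - 1 = 2 * m from by omega, cf.2.2.1, hm2]
  · norm_num at h ⊢
    obtain ⟨m, hm1, hm2⟩ := descent11 y.toNat x y hx hy le_rfl (by linarith)
    have cf := cf_eval (Real.sqrt 11) 3 3 6 cf11.1 cf11.2.1 cf11.2.2 m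
    refine ⟨2 * m + 1, ⟨m, by ring⟩, by omega, ?_, ?_⟩
    · rw [show 2 * m + 1 - 1 = 2 * m from by omega, cf.1, hm1]
    · rw [show 2 * m + 1 - 1 = 2 * m from by omega, cf.2.2.1, hm2]
  · norm_num at h ⊢
    obtain ⟨m, hm1, hm2⟩ := descent12 y.toNat x y hx hy le_rfl (by linarith)
    have cf := cf_eval (Real.sqrt 12) 3 2 6 cf12.1 cf12.2.1 cf12.2.2 m
    refine ⟨2 * m + 1, ⟨m, by ring⟩, by omega, ?_, ?_⟩
    · rw [show 2 * m + 1 - 1 = 2 * m from by omega, cf.1, hm1]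
    · rw [show 2 * m + 1 - 1 = 2 * m from by omega, cf.2.2.1, hm2]
end

section
/- (Classification of solutions for n = 13, equal multiplicities.) Define T : ℤ² → ℤ² by T(d, m) = (649d + 2340m + 2142, 180d + 649m + 594). Then T is a bijection of ℤ² mapping the set of integer solutions (d, m) of (2d+3)² − 13(2m+1)² = −4 onto itself, and every integer solution (d, m) of this equation has the form T^j(s) for some j ∈ ℤ and some s ∈ {(−3, 0), (0, 0), (0, −1), (−3, −1)}. -/
/-- The affine transformation `T(d, m) = (649d + 2340m + 2142, 180d + 649m + 594)`
of `ℤ²`, as a bijection (its linear part has determinant `649² - 2340·180 = 1`). -/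
def T : Equiv.Perm (ℤ × ℤ) where
  toFun p := (649 * p.1 + 2340 * p.2 + 2142, 180 * p.1 + 649 * p.2 + 594)
  invFun p := (649 * p.1 - 2340 * p.2 - 198, -180 * p.1 + 649 * p.2 + 54)
  left_inv := by intro ⟨a, b⟩; simp only [Prod.mk.injEq]; constructor <;> ring
  right_inv := by intro ⟨a, b⟩; simp only [Prod.mk.injEq]; constructor <;> ring

/-- The solution set of `(2d+3)² - 13(2m+1)² = -4`. -/
def Sol13 : Set (ℤ × ℤ) :=
  {p | (2 * p.1 + 3) ^ 2 - 13 * (2 * p.2 + 1) ^ 2 = -4}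

/-!
In the coordinates `x = 2d + 3`, `y = 2m + 1` the equation reads `x² - 13y² = -4`, and `T` is
multiplication of `x + y√13` by the unit `649 + 180√13` of norm `1`, so `T` and `T⁻¹` preserve
the solutions. Since `180√13 ≈ 649`, for a solution with `|y| ≥ 11` one of `T`, `T⁻¹` (according
to the sign of `xy`) strictly decreases `|y|`. The descent ends at `|y| ≤ 9`, where `13y² - 4` is a
square only for `y = ±1`, giving the four fundamental solutions.
-/

open Equiv

def fundamentalSol13 : Set (ℤ × ℤ) := {(-3, 0), (0, 0), (0, -1), (-3, -1)}

lemma T_fst_coord (p : ℤ × ℤ) :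
    2 * (T p).1 + 3 = 649 * (2 * p.1 + 3) + 2340 * (2 * p.2 + 1) := by
  simp only [T, coe_fn_mk]; ring

lemma T_snd_coord (p : ℤ × ℤ) :
    2 * (T p).2 + 1 = 649 * (2 * p.2 + 1) + 180 * (2 * p.1 + 3) := by
  simp only [T, coe_fn_mk]; ring

-- Written with `-x` so that the descent lemma below applies to the solution `(-x, y)`.
lemma T_inv_snd_coord (p : ℤ × ℤ) :
    2 * (T⁻¹ p).2 + 1 = 649 * (2 * p.2 + 1) + 180 * -(2 * p.1 + 3) := by
  simp only [T, Perm.inv_def, coe_fn_symm_mk]; ring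

lemma T_mem_Sol13_iff (p : ℤ × ℤ) : T p ∈ Sol13 ↔ p ∈ Sol13 := by
  have norm_mul_unit (x y : ℤ) :
      (649 * x + 2340 * y) ^ 2 - 13 * (649 * y + 180 * x) ^ 2 = x ^ 2 - 13 * y ^ 2 := by
    ring
  simp only [Sol13, Set.mem_ofPred_eq, T_fst_coord, T_snd_coord, norm_mul_unit]

lemma T_inv_mem_Sol13 {p : ℤ × ℤ} (hp : p ∈ Sol13) : T⁻¹ p ∈ Sol13 := by
  rwa [← T_mem_Sol13_iff, Perm.inv_def, apply_symm_apply]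

lemma image_T_Sol13 : T '' Sol13 = Sol13 := by
  ext p
  rw [image_eq_preimage_symm, Set.mem_preimage, ← T_mem_Sol13_iff, apply_symm_apply]

lemma sq_lt_sq_of_sq_sub_thirteen_mul_sq_eq_neg_four {x y : ℤ} (h : x ^ 2 - 13 * y ^ 2 = -4)
    (hxy : x * y < 0) (hy : 121 ≤ y ^ 2) : (649 * y + 180 * x) ^ 2 < y ^ 2 := by
  -- `w * z = y² + 4·180²` is small, while `y * z ≥ 1189 y²` because `|x| ≥ 3|y|`.
  set w := 649 * y + 180 * x
  set z := 649 * y - 180 * x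
  have hwz : w * z = y ^ 2 + 129600 := by linear_combination (-32400) * h
  have hxy3 : 3 * y ^ 2 ≤ -(x * y) := by
    refine (le_abs_self _).trans (abs_le_of_sq_le_sq ?_ (neg_nonneg.mpr hxy.le))
    nlinarith
  have hyz : y * z = 649 * y ^ 2 + 180 * -(x * y) := by ring
  have hlt : w * z < y * z := by linarith
  have hsq : (w * z) ^ 2 < (y * z) ^ 2 := pow_lt_pow_left₀ hlt (by rw [hwz]; positivity) two_ne_zero
  rw [mul_pow, mul_pow] at hsq
  exact lt_of_mul_lt_mul_right hsq (sq_nonneg z)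

lemma mem_fundamentalSol13_of_sq_lt {p : ℤ × ℤ} (hp : p ∈ Sol13) (hy : (2 * p.2 + 1) ^ 2 < 121) :
    p ∈ fundamentalSol13 := by
  obtain ⟨d, m⟩ := p
  replace hp : (2 * d + 3) ^ 2 - 13 * (2 * m + 1) ^ 2 = -4 := hp
  have hsq : IsSquare (13 * (2 * m + 1) ^ 2 - 4) := ⟨2 * d + 3, by linear_combination -hp⟩
  have hm : m = 0 ∨ m = -1 := by
    have hlo : -5 ≤ m := by nlinarith
    have hhi : m ≤ 4 := by nlinarith
    interval_cases m <;> first | omega | norm_num at hsq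
  have hd : (2 * d + 3) ^ 2 = 3 ^ 2 := by rcases hm with rfl | rfl <;> linear_combination hp
  rw [sq_eq_sq_iff_eq_or_eq_neg] at hd
  simp only [fundamentalSol13, Set.mem_insert_iff, Set.mem_singleton_iff, Prod.mk.injEq]
  omega

lemma exists_zpow_T_apply_of_mem_Sol13 {p : ℤ × ℤ} (hp : p ∈ Sol13) :
    ∃ (j : ℤ) (s : ℤ × ℤ), s ∈ fundamentalSol13 ∧ p = (T ^ j) s := by
  induction hn : (2 * p.2 + 1).natAbs using Nat.strong_induction_on generalizing p with
  | _ n ih =>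
  by_cases hsmall : (2 * p.2 + 1) ^ 2 < 121
  · exact ⟨0, p, mem_fundamentalSol13_of_sq_lt hp hsmall, rfl⟩
  push Not at hsmall
  have h : (2 * p.1 + 3) ^ 2 - 13 * (2 * p.2 + 1) ^ 2 = -4 := hp
  have hxy : (2 * p.1 + 3) * (2 * p.2 + 1) ≠ 0 := by
    apply mul_ne_zero <;> omega
  rcases hxy.lt_or_gt with hneg | hpos
  · have hdesc : (2 * (T p).2 + 1).natAbs < n := by
      rw [← hn, Int.natAbs_lt_iff_sq_lt, T_snd_coord]
      exact sq_lt_sq_of_sq_sub_thirteen_mul_sq_eq_neg_four h hneg hsmall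
    obtain ⟨j, s, hs, hj⟩ := ih _ hdesc ((T_mem_Sol13_iff p).2 hp) rfl
    refine ⟨-1 + j, s, hs, ?_⟩
    rw [zpow_add, Perm.mul_apply, ← hj, zpow_neg_one, Perm.inv_def, symm_apply_apply]
  · have hdesc : (2 * (T⁻¹ p).2 + 1).natAbs < n := by
      rw [← hn, Int.natAbs_lt_iff_sq_lt, T_inv_snd_coord]
      refine sq_lt_sq_of_sq_sub_thirteen_mul_sq_eq_neg_four (by linear_combination h) ?_ hsmall
      linarith [neg_mul (2 * p.1 + 3) (2 * p.2 + 1)]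
    obtain ⟨j, s, hs, hj⟩ := ih _ hdesc (T_inv_mem_Sol13 hp) rfl
    refine ⟨1 + j, s, hs, ?_⟩
    rw [zpow_add, Perm.mul_apply, ← hj, zpow_one, Perm.inv_def, apply_symm_apply]

/-- Classification of solutions for `n = 13`, equal multiplicities: `T` is a
bijection of `ℤ²` mapping the solution set of `(2d+3)² - 13(2m+1)² = -4` onto
itself, and every solution is `T^j(s)` for some `j ∈ ℤ` and some fundamental
solution `s ∈ {(-3,0), (0,0), (0,-1), (-3,-1)}`. -/
theorem classification_13_equal :
    Function.Bijective (⇑T) ∧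
    (⇑T) '' Sol13 = Sol13 ∧
    ∀ p ∈ Sol13, ∃ (j : ℤ) (s : ℤ × ℤ),
      s ∈ ({(-3, 0), (0, 0), (0, -1), (-3, -1)} : Set (ℤ × ℤ)) ∧ p = (T ^ j) s :=
  ⟨T.bijective, image_T_Sol13, fun _ hp => exists_zpow_T_apply_of_mem_Sol13 hp⟩
end

section
/- (Diophantine core of Theorem 4.11, k = 1 and k = 15 cases.) For each k ∈ {1, 15}, the integer solutions (d, m) of the equation (2d+3)² − 16(2m+1)² + 8km = −7 are exactly the two pairs (0, 0) and (−3, 0). -/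
/-!
Put `x = 2d + 3`. The equation says `x² = 64m² + 8(8 - k)m + 9`, which is
`64m² + 56m + 9` for `k = 1` and, after `m ↦ -m`, the same for `k = 15`.
For `m ≠ 0` this lies strictly between `(8m + 3)²` and `(8m + 4)²`, consecutive squares,
so `m = 0`; then `x² = 9` leaves `d ∈ {0, -3}`.
-/

theorem Int.not_sq_lt_sq_lt_add_one_sq {a x : ℤ} (ha : 0 ≤ a) (h₁ : a ^ 2 < x ^ 2)
    (h₂ : x ^ 2 < (a + 1) ^ 2) : False := by
  rw [sq_lt_sq] at h₁ h₂
  rw [abs_of_nonneg ha] at h₁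
  rw [abs_of_nonneg (by omega : 0 ≤ a + 1)] at h₂
  omega

theorem Int.eq_zero_of_sq_eq_64_mul_sq_add_56_mul_add_9 {x n : ℤ}
    (h : x ^ 2 = 64 * n ^ 2 + 56 * n + 9) : n = 0 := by
  rcases lt_trichotomy n 0 with hn | hn | hn
  · exact (Int.not_sq_lt_sq_lt_add_one_sq (a := -(8 * n + 4)) (x := x) (by omega)
      (by nlinarith) (by nlinarith)).elim
  · exact hn
  · exact (Int.not_sq_lt_sq_lt_add_one_sq (a := 8 * n + 3) (x := x) (by omega)
      (by nlinarith) (by nlinarith)).elim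

theorem Int.eq_zero_or_eq_neg_three_of_two_mul_add_three_sq_eq_nine {d : ℤ}
    (h : (2 * d + 3) ^ 2 = 9) : d = 0 ∨ d = -3 := by
  have hd : d * (d + 3) = 0 := by linarith
  rcases mul_eq_zero.mp hd with h0 | h0
  · exact .inl h0
  · exact .inr (by linarith)

/-- Diophantine core of Theorem 4.11, `k = 1` and `k = 15` cases: for
`k ∈ {1, 15}`, the integer solutions of `(2d+3)² - 16(2m+1)² + 8km = -7` are
exactly `(0,0)` and `(-3,0)`. -/
theorem diophantine_16_k_one_fifteen (k : ℤ) (hk : k ∈ ({1, 15} : Set ℤ)) (d m : ℤ) :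
    (2 * d + 3) ^ 2 - 16 * (2 * m + 1) ^ 2 + 8 * k * m = -7 ↔
      (d, m) ∈ ({(0, 0), (-3, 0)} : Set (ℤ × ℤ)) := by
  simp only [Set.mem_insert_iff, Set.mem_singleton_iff, Prod.mk.injEq] at hk ⊢
  constructor
  · intro h
    have hm : m = 0 := by
      rcases hk with rfl | rfl
      · exact Int.eq_zero_of_sq_eq_64_mul_sq_add_56_mul_add_9 (x := 2 * d + 3) (by linarith)
      · exact neg_eq_zero.mp
          (Int.eq_zero_of_sq_eq_64_mul_sq_add_56_mul_add_9 (x := 2 * d + 3) (by linarith))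
    subst hm
    have hd : (2 * d + 3) ^ 2 = 9 := by linarith
    rcases Int.eq_zero_or_eq_neg_three_of_two_mul_add_three_sq_eq_nine hd with rfl | rfl
    · exact .inl ⟨rfl, rfl⟩
    · exact .inr ⟨rfl, rfl⟩
  · rintro (⟨rfl, rfl⟩ | ⟨rfl, rfl⟩) <;> norm_num
end

section
/- (Diophantine core of Theorem 4.12.) For k ∈ {0, 1, 2, 23, 24}, consider the integer solutions (d, m) of the equation (2d+3)² − 25(2m+1)² + 8km = −8. There are no solutions when k ∈ {0, 2, 23}; the solutions for k = 1 are exactly (1, −1) and (−4, −1); and the solutions for k = 24 are exactly (−4, 1) and (1, 1). -/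
/-!
Multiplying by 25 and completing the square in `m` turns the equation into
`(50m + 25 - 2k)² - (10d + 15)² = (25 - 2k)² - 425`. For `k ∈ {1, 2, 23, 24}` the right-hand side is a
small positive number (16 or 104), and both factors of the difference of squares divide it; this
confines `(d, m)` to a small box, empty for `k = 2`. For `k = 0` the equation has no solution
modulo 5, since `2` is not a square there. The substitution `(k, m) ↦ (25 - k, -m)` preserves
the equation and reduces `k = 23, 24` to `k = 2, 1`.
-/

def IsSol (k d m : ℤ) : Prop :=
  (2 * d + 3) ^ 2 - 25 * (2 * m + 1) ^ 2 + 8 * k * m = -8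

lemma abs_sub_le_and_abs_add_le_of_sq_sub_sq_eq {a b N : ℤ} (hN : 0 < N)
    (h : a ^ 2 - b ^ 2 = N) : |a - b| ≤ N ∧ |a + b| ≤ N := by
  have hsub : a - b ∣ N := ⟨a + b, by rw [← h]; ring⟩
  have hadd : a + b ∣ N := ⟨a - b, by rw [← h]; ring⟩
  exact ⟨Int.le_of_dvd hN ((abs_dvd _ _).2 hsub), Int.le_of_dvd hN ((abs_dvd _ _).2 hadd)⟩

lemma IsSol.sq_sub_sq {k d m : ℤ} (h : IsSol k d m) :
    (50 * m + 25 - 2 * k) ^ 2 - (10 * d + 15) ^ 2 = (25 - 2 * k) ^ 2 - 425 := by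
  unfold IsSol at h
  linear_combination (-25) * h

lemma IsSol.abs_factors_le {k d m : ℤ} (h : IsSol k d m) (hk : 425 < (25 - 2 * k) ^ 2) :
    |50 * m + 25 - 2 * k - (10 * d + 15)| ≤ (25 - 2 * k) ^ 2 - 425 ∧
      |50 * m + 25 - 2 * k + (10 * d + 15)| ≤ (25 - 2 * k) ^ 2 - 425 :=
  abs_sub_le_and_abs_add_le_of_sq_sub_sq_eq (by linarith) h.sq_sub_sq

lemma not_isSol_zero (d m : ℤ) : ¬ IsSol 0 d m := by
  intro h
  have h5 : (2 * d + 3 : ZMod 5) ^ 2 = 2 := by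
    have hcast := congrArg (Int.cast : ℤ → ZMod 5) h
    push_cast at hcast
    linear_combination hcast + (5 * (2 * (m : ZMod 5) + 1) ^ 2 - 2) * (by decide : (5 : ZMod 5) = 0)
  exact (by decide : ∀ x : ZMod 5, x ^ 2 ≠ 2) _ h5

lemma isSol_twentyFive_sub_iff (k d m : ℤ) : IsSol (25 - k) d m ↔ IsSol k d (-m) := by
  unfold IsSol
  constructor <;> intro h <;> linear_combination h

lemma not_isSol_two (d m : ℤ) : ¬ IsSol 2 d m := by
  intro h
  have hb := h.abs_factors_le (by norm_num)
  simp only [abs_le] at hb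
  omega

lemma isSol_one_iff (d m : ℤ) : IsSol 1 d m ↔ (d, m) = (1, -1) ∨ (d, m) = (-4, -1) := by
  refine ⟨fun h => ?_, by rintro (h | h) <;> simp only [Prod.mk.injEq] at h <;>
    obtain ⟨rfl, rfl⟩ := h <;> norm_num [IsSol]⟩
  have hb := h.abs_factors_le (by norm_num)
  simp only [abs_le] at hb
  obtain ⟨hm₁, hm₂⟩ : -2 ≤ m ∧ m ≤ 1 := by omega
  obtain ⟨hd₁, hd₂⟩ : -11 ≤ d ∧ d ≤ 8 := by omega
  unfold IsSol at h
  interval_cases m <;> interval_cases d <;> simp_all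

lemma not_isSol_twentyThree (d m : ℤ) : ¬ IsSol 23 d m := fun h =>
  not_isSol_two d (-m) ((isSol_twentyFive_sub_iff 2 d m).1 (by norm_num [h]))

lemma isSol_twentyFour_iff (d m : ℤ) : IsSol 24 d m ↔ (d, m) = (-4, 1) ∨ (d, m) = (1, 1) := by
  rw [show (24 : ℤ) = 25 - 1 by norm_num, isSol_twentyFive_sub_iff, isSol_one_iff]
  simp only [Prod.mk.injEq, neg_eq_iff_eq_neg, neg_neg]
  tauto

/-- Diophantine core of Theorem 4.12: for the equation
`(2d+3)² - 25(2m+1)² + 8km = -8` over the integers: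
there are no solutions when `k ∈ {0, 2, 23}`; for `k = 1` the solutions are
exactly `(1,-1)` and `(-4,-1)`; and for `k = 24` the solutions are exactly
`(-4,1)` and `(1,1)`. -/
theorem diophantine_25 :
    (∀ k ∈ ({0, 2, 23} : Set ℤ), ∀ d m : ℤ,
        (2 * d + 3) ^ 2 - 25 * (2 * m + 1) ^ 2 + 8 * k * m ≠ -8) ∧
    (∀ d m : ℤ,
        (2 * d + 3) ^ 2 - 25 * (2 * m + 1) ^ 2 + 8 * 1 * m = -8 ↔
          (d, m) ∈ ({(1, -1), (-4, -1)} : Set (ℤ × ℤ))) ∧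
    (∀ d m : ℤ,
        (2 * d + 3) ^ 2 - 25 * (2 * m + 1) ^ 2 + 8 * 24 * m = -8 ↔
          (d, m) ∈ ({(-4, 1), (1, 1)} : Set (ℤ × ℤ))) := by
  simp only [Set.mem_insert_iff, Set.mem_singleton_iff]
  refine ⟨?_, isSol_one_iff, isSol_twentyFour_iff⟩
  rintro k (rfl | rfl | rfl) d m
  exacts [not_isSol_zero d m, not_isSol_two d m, not_isSol_twentyThree d m]
end

section
/- (Remark 5.10, arithmetic core.) Let n ∈ {10, 11, 12} and let p_k/q_k (k ≥ 1) be the convergents of the simple continued fraction expansion of √n. For every odd integer k ≥ 3, one has 3 p_k − n q_k = ⌊ q_k (3√n − n) ⌋. -/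
open GenContFract

/-- Integrality of auxiliary continuants of the continued fraction of a real
number whose expansion never terminates. -/
lemma contsAux_int_aux (v : ℝ) (hnt : ∀ m, ¬(GenContFract.of v).TerminatedAt m) :
    ∀ m, ∃ a b : ℤ, (GenContFract.of v).contsAux m = ⟨(a : ℝ), (b : ℝ)⟩ := by
  have H : ∀ m, (∃ a b : ℤ, (GenContFract.of v).contsAux m = ⟨(a : ℝ), (b : ℝ)⟩) ∧
      (∃ a b : ℤ, (GenContFract.of v).contsAux (m + 1) = ⟨(a : ℝ), (b : ℝ)⟩) := by
    intro m
    induction m with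
    | zero =>
      refine ⟨⟨1, 0, by simp [GenContFract.contsAux]⟩, ⟨⌊v⌋, 1, ?_⟩⟩
      show (⟨(GenContFract.of v).h, 1⟩ : GenContFract.Pair ℝ) = _
      simp [GenContFract.of_h_eq_floor]
    | succ m ih =>
      refine ⟨ih.2, ?_⟩
      obtain ⟨gp, hs⟩ : ∃ gp, (GenContFract.of v).s.get? m = some gp :=
        Option.ne_none_iff_exists'.1 (hnt m)
      obtain ⟨ha1, z, hz⟩ := GenContFract.of_partNum_eq_one_and_exists_int_partDen_eq hs
      obtain ⟨a, b, hab⟩ := ih.1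
      obtain ⟨a', b', hab'⟩ := ih.2
      refine ⟨z * a' + a, z * b' + b, ?_⟩
      rw [GenContFract.contsAux_recurrence hs hab hab', ha1, hz]
      simp only [GenContFract.Pair.mk.injEq]
      constructor <;> push_cast <;> ring
  exact fun m => (H m).1

/-- Remark 5.10, arithmetic core: for `n ∈ {10,11,12}` and odd `k ≥ 3`,
`3 p_k - n q_k = ⌊ q_k (3√n - n) ⌋`, where `p_k/q_k` is the `k`-th convergent
of the continued fraction of `√n`. -/
theorem three_p_sub_n_q_eq_floor (n : ℕ) (hn : n ∈ ({10, 11, 12} : Set ℕ))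
    (k : ℕ) (hk : Odd k) (hk3 : 3 ≤ k) :
    3 * (GenContFract.of (Real.sqrt n)).nums (k - 1)
        - (n : ℝ) * (GenContFract.of (Real.sqrt n)).dens (k - 1) =
      (⌊(GenContFract.of (Real.sqrt n)).dens (k - 1) * (3 * Real.sqrt n - (n : ℝ))⌋ : ℤ) := by
  set v : ℝ := Real.sqrt n with hv
  set g := GenContFract.of v with hg
  -- irrationality
  have hirr : Irrational v := by
    rw [hv, irrational_sqrt_natCast_iff]
    rcases hn with rfl | rfl | rfl <;>
      · rintro ⟨r, hr⟩
        rcases Nat.lt_or_ge r 4 with h | h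
        · interval_cases r <;> omega
        · nlinarith
  have hterm : ¬g.Terminates := by
    rw [hg, GenContFract.terminates_iff_rat]
    rintro ⟨q, hq⟩
    exact hirr ⟨q, hq.symm⟩
  have hnt : ∀ m, ¬g.TerminatedAt m := fun m h => hterm ⟨m, h⟩
  -- the stream never vanishes, and fractional parts are never zero
  have hstream : ∀ j, IntFractPair.stream v j ≠ none := by
    intro j
    cases j with
    | zero => simp [IntFractPair.stream]
    | succ j =>
      exact (not_congr GenContFract.of_terminatedAt_n_iff_succ_nth_intFractPair_stream_eq_none).1
        (hnt j)
  have hfrne : ∀ j (ifp : IntFractPair ℝ), IntFractPair.stream v j = some ifp → ifp.fr ≠ 0 := by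
    intro j ifp hj h0
    exact hstream (j + 1) (IntFractPair.stream_eq_none_of_fr_eq_zero hj h0)
  -- set `m := k - 1`, even and `≥ 2`
  set m := k - 1 with hm
  have hmeven : Even m := Nat.Odd.sub_odd hk odd_one
  have hm2 : 2 ≤ m := by omega
  -- stream value at `m`
  obtain ⟨ifp, hifp⟩ : ∃ ifp, IntFractPair.stream v m = some ifp :=
    Option.ne_none_iff_exists'.1 (hstream m)
  have hfr0 : ifp.fr ≠ 0 := hfrne m ifp hifp
  have hfrpos : 0 < ifp.fr :=
    lt_of_le_of_ne (IntFractPair.nth_stream_fr_nonneg hifp) (Ne.symm hfr0)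
  -- abbreviations for continuants
  set B : ℝ := (g.contsAux (m + 1)).b with hB
  set pB : ℝ := (g.contsAux m).b with hpB
  have hpBnn : 0 ≤ pB := GenContFract.zero_le_of_contsAux_b
  have hBpos : 0 < B := by
    have h1 : (Nat.fib (m + 1) : ℝ) ≤ B :=
      GenContFract.fib_le_of_contsAux_b (Or.inr (hnt (m + 1 - 2)))
    have h2 : (1 : ℝ) ≤ (Nat.fib (m + 1) : ℝ) := by
      have := Nat.fib_pos.mpr (Nat.succ_pos m)
      exact_mod_cast this
    linarith
  -- the error formula
  have hsub : v - g.convs m = 1 / (B * (ifp.fr⁻¹ * B + pB)) := by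
    have := GenContFract.sub_convs_eq hifp
    simp only [hfr0, if_false] at this
    rw [hg, this, hmeven.neg_one_pow]
  -- the next partial denominator
  have hstream_succ : IntFractPair.stream v (m + 1) = some (IntFractPair.of ifp.fr⁻¹) :=
    IntFractPair.stream_succ_of_some hifp hfr0
  have hfr'ne : (IntFractPair.of ifp.fr⁻¹).fr ≠ 0 := hfrne (m + 1) _ hstream_succ
  have hb_lt : ((IntFractPair.of ifp.fr⁻¹).b : ℝ) < ifp.fr⁻¹ := by
    have hfract : Int.fract ifp.fr⁻¹ ≠ 0 := hfr'ne
    have : (⌊ifp.fr⁻¹⌋ : ℝ) ≠ ifp.fr⁻¹ := by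
      intro h
      apply hfract
      rw [Int.fract]
      linarith [h]
    exact lt_of_le_of_ne (Int.floor_le _) this
  have hs_eq : g.s.get? m = some ⟨1, ((IntFractPair.of ifp.fr⁻¹).b : ℝ)⟩ :=
    GenContFract.get?_of_eq_some_of_succ_get?_intFractPair_stream hstream_succ
  -- `contsAux (m+2)` via the recurrence
  have hrec : (g.contsAux (m + 2)).b = ((IntFractPair.of ifp.fr⁻¹).b : ℝ) * B + pB := by
    rw [GenContFract.contsAux_recurrence hs_eq rfl rfl]
    simp
    rfl
  have hfib : (3 : ℝ) ≤ (g.contsAux (m + 2)).b := by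
    have h1 : (Nat.fib (m + 2) : ℝ) ≤ (g.contsAux (m + 2)).b :=
      GenContFract.fib_le_of_contsAux_b (Or.inr (hnt (m + 2 - 2)))
    have h2 : 3 ≤ Nat.fib (m + 2) := by
      calc 3 = Nat.fib 4 := rfl
        _ ≤ Nat.fib (m + 2) := Nat.fib_mono (by omega)
    have : (3 : ℝ) ≤ (Nat.fib (m + 2) : ℝ) := by exact_mod_cast h2
    linarith
  set D : ℝ := ifp.fr⁻¹ * B + pB with hD
  have hD3 : 3 < D := by
    have : ((IntFractPair.of ifp.fr⁻¹).b : ℝ) * B + pB < D := by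
      rw [hD]
      have := mul_lt_mul_of_pos_right hb_lt hBpos
      linarith
    rw [hrec] at hfib
    exact hfib.trans_lt this
  have hDpos : 0 < D := by linarith
  -- identify numerator and denominator
  have hnum : g.nums m = (g.contsAux (m + 1)).a := by
    rw [GenContFract.num_eq_conts_a, GenContFract.nth_cont_eq_succ_nth_contAux]
  have hden : g.dens m = B := by
    rw [GenContFract.den_eq_conts_b, GenContFract.nth_cont_eq_succ_nth_contAux]
  -- integrality
  obtain ⟨P, Q, hPQ⟩ := contsAux_int_aux v hnt (m + 1)
  have hA : g.nums m = (P : ℝ) := by rw [hnum, hPQ]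
  have hQ : g.dens m = (Q : ℝ) := by rw [hden, hB, hPQ]
  have hBQ : B = (Q : ℝ) := by rw [hB, hPQ]
  -- the key identity: B * v - P = 1 / D
  have hconv : g.convs m = (P : ℝ) / B := by
    rw [GenContFract.conv_eq_num_div_den, hA, hden]
  have hkey : B * v - (P : ℝ) = 1 / D := by
    have h1 : v - (P : ℝ) / B = 1 / (B * D) := by rw [← hconv]; exact hsub
    have h2 : B * (v - (P : ℝ) / B) = B * (1 / (B * D)) := by rw [h1]
    rw [mul_sub, mul_div_cancel₀ _ hBpos.ne'] at h2
    rw [h2]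
    field_simp
  -- conclude via the floor characterization
  have hfloor : ⌊g.dens m * (3 * v - (n : ℝ))⌋ = 3 * P - (n : ℤ) * Q := by
    rw [Int.floor_eq_iff]
    have hexp : g.dens m * (3 * v - (n : ℝ)) =
        ((3 * P - (n : ℤ) * Q : ℤ) : ℝ) + 3 * (1 / D) := by
      rw [hQ, ← hBQ]
      push_cast
      rw [← hBQ]
      nlinarith [hkey]
    have h3D0 : 0 < 3 * (1 / D) := by positivity
    have h3D1 : 3 * (1 / D) < 1 := by
      rw [mul_one_div, div_lt_one hDpos]
      exact hD3
    constructor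
    · rw [hexp]; linarith
    · rw [hexp]; push_cast; linarith
  -- final assembly
  rw [hfloor, hA, hQ]
  push_cast
  ring
end

section
/- (Arithmetic core of Proposition 5.9.) Let n ∈ {10, 11, 12} and let p_k/q_k (k ≥ 1) be the convergents of the simple continued fraction expansion of √n. For every odd integer k ≥ 3, one has (11 − n) + (3 p_k − n q_k) < 0; equivalently, for the class D_k = ((p_k−3)/2) H − ((q_k−1)/2) E, the lattice Euler characteristic χ(2D_k − K) = 1 + (9−n)/2 + (3p_k − n q_k)/2 is negative. -/
/-!
For `n ∈ {10, 11, 12}`, the convergents `p_k / q_k` (k ≥ 1) of the simple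
continued fraction expansion of `√n` are given, in Mathlib's terms, by
`(GenContFract.of (√n)).nums (k-1) / (GenContFract.of (√n)).dens (k-1)`
(Mathlib's indexing starts at 0, so the paper's `k`-th convergent is the
`(k-1)`-st in Mathlib).  For odd `k`, `p_k` and `q_k` are odd, so
`D_k = ((p_k-3)/2) H - ((q_k-1)/2) E` is an integral class with
`χ(2D_k - K) = 1 + (9-n)/2 + (3p_k - n q_k)/2`.
-/

private lemma cf_bound (v : ℝ) (hirr : Irrational v) (h3 : 3 < v) (h4 : v < 4)
    (D : ℤ) (hD : 1 ≤ D) (hDv : (D : ℝ) ≤ (v - 3)⁻¹) (m : ℕ) (hm : 1 ≤ m) :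
    (D : ℝ) ≤ (GenContFract.of v).dens m ∧
      (GenContFract.of v).nums m ≤ (GenContFract.of v).dens m * v
        + 1 / (GenContFract.of v).dens m := by
  have hfl : ⌊v⌋ = 3 := by
    rw [Int.floor_eq_iff]
    constructor <;> push_cast <;> linarith
  have hfr : Int.fract v = v - 3 := by
    rw [Int.fract, hfl]; norm_num
  have hfrne : Int.fract v ≠ 0 := by rw [hfr]; intro h; linarith [sub_eq_zero.mp h]
  have hnt : ∀ j, ¬(GenContFract.of v).TerminatedAt j := by
    intro j hj
    obtain ⟨q, hq⟩ := GenContFract.exists_rat_eq_of_terminates ⟨j, hj⟩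
    exact hirr ⟨q, hq.symm⟩
  have hd1 : (GenContFract.of v).dens 1 = (⌊(Int.fract v)⁻¹⌋ : ℝ) :=
    GenContFract.first_den_eq (GenContFract.of_s_head hfrne)
  have hDd1 : (D : ℝ) ≤ (GenContFract.of v).dens 1 := by
    rw [hd1]
    exact_mod_cast Int.le_floor.mpr (by rw [hfr]; exact hDv)
  have hmono : Monotone (GenContFract.of v).dens :=
    monotone_nat_of_le_succ fun j => GenContFract.of_den_mono
  have hDm : (D : ℝ) ≤ (GenContFract.of v).dens m := hDd1.trans (hmono hm)
  have hd0 : (0 : ℝ) < (GenContFract.of v).dens m :=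
    lt_of_lt_of_le (by exact_mod_cast hD : (0:ℝ) < (D:ℝ)) hDm
  have hd0' : (0 : ℝ) < (GenContFract.of v).dens (m + 1) :=
    lt_of_lt_of_le hd0 (hmono (Nat.le_succ m))
  refine ⟨hDm, ?_⟩
  have habs := GenContFract.abs_sub_convs_le (hnt m)
  rw [GenContFract.conv_eq_num_div_den] at habs
  have h1 : (GenContFract.of v).nums m / (GenContFract.of v).dens m
      ≤ v + 1 / ((GenContFract.of v).dens m * (GenContFract.of v).dens (m + 1)) := by
    have := abs_le.mp habs
    linarith [this.1]
  have h2 : (GenContFract.of v).nums m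
      ≤ (GenContFract.of v).dens m * v + 1 / (GenContFract.of v).dens (m + 1) := by
    calc (GenContFract.of v).nums m
        = (GenContFract.of v).dens m
            * ((GenContFract.of v).nums m / (GenContFract.of v).dens m) := by
          field_simp
      _ ≤ (GenContFract.of v).dens m
            * (v + 1 / ((GenContFract.of v).dens m * (GenContFract.of v).dens (m + 1))) :=
          mul_le_mul_of_nonneg_left h1 hd0.le
      _ = (GenContFract.of v).dens m * v + 1 / (GenContFract.of v).dens (m + 1) := by
          field_simp
  have h3' : 1 / (GenContFract.of v).dens (m + 1) ≤ 1 / (GenContFract.of v).dens m :=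
    one_div_le_one_div_of_le hd0 (hmono (Nat.le_succ m))
  linarith


/-- Arithmetic core of Proposition 5.9: for `n ∈ {10,11,12}` and odd `k ≥ 3`,
one has `(11 - n) + (3 p_k - n q_k) < 0`; equivalently, the lattice Euler
characteristic `χ(2D_k - K) = 1 + (9-n)/2 + (3 p_k - n q_k)/2` is negative. -/
theorem chi_two_D_sub_K_neg (n : ℕ) (hn : n ∈ ({10, 11, 12} : Set ℕ))
    (k : ℕ) (hk : Odd k) (hk3 : 3 ≤ k) :
    ((11 : ℝ) - (n : ℝ)) + (3 * (GenContFract.of (Real.sqrt n)).nums (k - 1)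
        - (n : ℝ) * (GenContFract.of (Real.sqrt n)).dens (k - 1)) < 0 ∧
      1 + ((9 : ℝ) - (n : ℝ)) / 2 + (3 * (GenContFract.of (Real.sqrt n)).nums (k - 1)
        - (n : ℝ) * (GenContFract.of (Real.sqrt n)).dens (k - 1)) / 2 < 0 := by
  have hm : 1 ≤ k - 1 := by omega
  have hn' : n = 10 ∨ n = 11 ∨ n = 12 := by simpa using hn
  suffices h : ((11 : ℝ) - (n : ℝ)) + (3 * (GenContFract.of (Real.sqrt n)).nums (k - 1)
      - (n : ℝ) * (GenContFract.of (Real.sqrt n)).dens (k - 1)) < 0 by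
    exact ⟨h, by linarith⟩
  rcases hn' with rfl | rfl | rfl
  · -- n = 10
    set v := Real.sqrt ((10:ℕ):ℝ) with hvdef
    have hv2 : v ^ 2 = 10 := by
      rw [hvdef]; rw [Real.sq_sqrt] <;> norm_num
    have hv0 : 0 ≤ v := Real.sqrt_nonneg _
    have h3 : 3 < v := by nlinarith
    have h4 : v < 4 := by nlinarith
    have hirr : Irrational v := by
      rw [hvdef]
      exact irrational_sqrt_natCast_iff.mpr
        (by rintro ⟨r, hr⟩; have h1 : r ≤ 4 := by nlinarith
            have h2 : r = 0 ∨ r = 1 ∨ r = 2 ∨ r = 3 ∨ r = 4 := by omega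
            rcases h2 with rfl|rfl|rfl|rfl|rfl <;> omega)
    have hpos : 0 < v - 3 := by linarith
    have hDv : ((6:ℤ):ℝ) ≤ (v - 3)⁻¹ := by
      have hmul : (v - 3) * (v - 3)⁻¹ = 1 := mul_inv_cancel₀ (ne_of_gt hpos)
      have hip : 0 < (v - 3)⁻¹ := inv_pos.mpr hpos
      have hle : v ≤ 3 + 1/6 := by nlinarith
      nlinarith [hmul, hip, hle]
    obtain ⟨hDm, hnum⟩ := cf_bound v hirr h3 h4 6 (by norm_num) hDv (k - 1) hm
    push_cast at hDm
    have hd0 : (0:ℝ) < (GenContFract.of v).dens (k - 1) := by linarith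
    have hvU : v ≤ 16/5 := by nlinarith
    have hdv : (GenContFract.of v).dens (k - 1) * v ≤ (GenContFract.of v).dens (k - 1) * (16/5) :=
      mul_le_mul_of_nonneg_left hvU hd0.le
    have hinv : 1 / (GenContFract.of v).dens (k - 1) ≤ 1 / 6 :=
      one_div_le_one_div_of_le (by norm_num) hDm
    push_cast
    linarith
  · -- n = 11
    set v := Real.sqrt ((11:ℕ):ℝ) with hvdef
    have hv2 : v ^ 2 = 11 := by
      rw [hvdef]; rw [Real.sq_sqrt] <;> norm_num
    have hv0 : 0 ≤ v := Real.sqrt_nonneg _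
    have h3 : 3 < v := by nlinarith
    have h4 : v < 4 := by nlinarith
    have hirr : Irrational v := by
      rw [hvdef]
      exact irrational_sqrt_natCast_iff.mpr
        (by rintro ⟨r, hr⟩; have h1 : r ≤ 4 := by nlinarith
            have h2 : r = 0 ∨ r = 1 ∨ r = 2 ∨ r = 3 ∨ r = 4 := by omega
            rcases h2 with rfl|rfl|rfl|rfl|rfl <;> omega)
    have hpos : 0 < v - 3 := by linarith
    have hDv : ((2:ℤ):ℝ) ≤ (v - 3)⁻¹ := by
      have hmul : (v - 3) * (v - 3)⁻¹ = 1 := mul_inv_cancel₀ (ne_of_gt hpos)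
      have hip : 0 < (v - 3)⁻¹ := inv_pos.mpr hpos
      have hle : v ≤ 3 + 1/2 := by nlinarith
      nlinarith [hmul, hip, hle]
    obtain ⟨hDm, hnum⟩ := cf_bound v hirr h3 h4 2 (by norm_num) hDv (k - 1) hm
    push_cast at hDm
    have hd0 : (0:ℝ) < (GenContFract.of v).dens (k - 1) := by linarith
    have hvU : v ≤ 167/50 := by nlinarith
    have hdv : (GenContFract.of v).dens (k - 1) * v ≤ (GenContFract.of v).dens (k - 1) * (167/50) :=
      mul_le_mul_of_nonneg_left hvU hd0.le
    have hinv : 1 / (GenContFract.of v).dens (k - 1) ≤ 1 / 2 :=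
      one_div_le_one_div_of_le (by norm_num) hDm
    push_cast
    linarith
  · -- n = 12
    set v := Real.sqrt ((12:ℕ):ℝ) with hvdef
    have hv2 : v ^ 2 = 12 := by
      rw [hvdef]; rw [Real.sq_sqrt] <;> norm_num
    have hv0 : 0 ≤ v := Real.sqrt_nonneg _
    have h3 : 3 < v := by nlinarith
    have h4 : v < 4 := by nlinarith
    have hirr : Irrational v := by
      rw [hvdef]
      exact irrational_sqrt_natCast_iff.mpr
        (by rintro ⟨r, hr⟩; have h1 : r ≤ 4 := by nlinarith
            have h2 : r = 0 ∨ r = 1 ∨ r = 2 ∨ r = 3 ∨ r = 4 := by omega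
            rcases h2 with rfl|rfl|rfl|rfl|rfl <;> omega)
    have hpos : 0 < v - 3 := by linarith
    have hDv : ((2:ℤ):ℝ) ≤ (v - 3)⁻¹ := by
      have hmul : (v - 3) * (v - 3)⁻¹ = 1 := mul_inv_cancel₀ (ne_of_gt hpos)
      have hip : 0 < (v - 3)⁻¹ := inv_pos.mpr hpos
      have hle : v ≤ 3 + 1/2 := by nlinarith
      nlinarith [hmul, hip, hle]
    obtain ⟨hDm, hnum⟩ := cf_bound v hirr h3 h4 2 (by norm_num) hDv (k - 1) hm
    push_cast at hDm
    have hd0 : (0:ℝ) < (GenContFract.of v).dens (k - 1) := by linarith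
    have hvU : v ≤ 347/100 := by nlinarith
    have hdv : (GenContFract.of v).dens (k - 1) * v ≤ (GenContFract.of v).dens (k - 1) * (347/100) :=
      mul_le_mul_of_nonneg_left hvU hd0.le
    have hinv : 1 / (GenContFract.of v).dens (k - 1) ≤ 1 / 2 :=
      one_div_le_one_div_of_le (by norm_num) hDm
    push_cast
    linarith
end
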